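/- arXiv:math/9411236 — 11 statements merged into one kernel-verified Lean document; each statement's English description precedes it below -/
import Mathlib

section
/- Every weak cycle in a hypergraph contains a (not necessarily contiguous) subsequence that is a cycle. Consequently, a hypergraph with no cycles has no weak cycles. -/
variable {V : Type*} [DecidableEq V] [Fintype V]

/-- The weight of a vertex set `X`: the number of hyperedges contained in `X`. -/
def hWeight (T : Finset (Finset V)) (X : Finset V) : ℕ :=
  (T.filter (· ⊆ X)).card

/-- A vertex set `X` is dense if `‖X‖ ≤ 2[X]`. -/
def HDense (T : Finset (Finset V)) (X : Finset V) : Prop :=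
  X.card ≤ 2 * hWeight T X

/-- A vertex set `X` is super-dense (immodest) if `‖X‖ < 2[X]`. -/
def HSuperDense (T : Finset (Finset V)) (X : Finset V) : Prop :=
  X.card < 2 * hWeight T X

/-- A hypergraph is `l`-meager if it has no (nonempty) dense vertex set of cardinality `≤ 2l`. -/
def HMeager (T : Finset (Finset V)) (l : ℕ) : Prop :=
  ∀ X : Finset V, X.Nonempty → X.card ≤ 2 * l → ¬ HDense T X

/-- A hypergraph is `l`-modest if it has no super-dense vertex set of cardinality `≤ 2l`. -/
def HModest (T : Finset (Finset V)) (l : ℕ) : Prop :=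
  ∀ X : Finset V, X.card ≤ 2 * l → ¬ HSuperDense T X

/-- Vertices `x` and `y` are adjacent if some hyperedge contains both. -/
def Adjacent (T : Finset (Finset V)) (x y : V) : Prop :=
  x ≠ y ∧ ∃ h ∈ T, x ∈ h ∧ y ∈ h

/-- A weak cycle: `k ≥ 3` distinct vertices (indices mod `k`, cyclic successor given
by `finRotate`), consecutive vertices adjacent, and either `k > 3` or (`k = 3` and)
the set of the three vertices is not a hyperedge. -/
def IsWeakCycle (T : Finset (Finset V)) {k : ℕ} (x : Fin k → V) : Prop :=
  3 ≤ k ∧ Function.Injective x ∧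
    (∀ i : Fin k, Adjacent T (x i) (x (finRotate k i))) ∧
    (3 < k ∨ Finset.univ.image x ∉ T)

/-- A cycle: either a cycle of length `k ≥ 3` (a weak cycle with no consecutive triple
forming a hyperedge), or a cycle of length `2` (two vertices lying in two distinct
hyperedges whose witnesses are distinct and different from the two vertices). -/
def IsCycle (T : Finset (Finset V)) {k : ℕ} (x : Fin k → V) : Prop :=
  (3 ≤ k ∧ IsWeakCycle T x ∧
    ∀ i : Fin k,
      ({x i, x (finRotate k i), x (finRotate k (finRotate k i))} : Finset V) ∉ T)
  ∨ (k = 2 ∧ Function.Injective x ∧ ∃ y₁ y₂ : V, y₁ ≠ y₂ ∧ (∀ i, y₁ ≠ x i) ∧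
      (∀ i, y₂ ≠ x i) ∧ insert y₁ (Finset.univ.image x) ∈ T ∧
      insert y₂ (Finset.univ.image x) ∈ T)

lemma valSuccAbove {n : ℕ} (j : Fin (n+1)) (t : Fin n) :
    ((j.succAbove t : Fin (n+1)) : ℕ) = if (t:ℕ) < (j:ℕ) then (t:ℕ) else (t:ℕ)+1 := by
  rcases Nat.lt_or_ge (t:ℕ) (j:ℕ) with h | h
  · rw [Fin.succAbove_of_castSucc_lt _ _ (by simpa [Fin.lt_def] using h)]
    simp [h]
  · rw [Fin.succAbove_of_le_castSucc _ _ (by simpa [Fin.le_def] using h)]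
    simp [Nat.not_lt.2 h]

lemma valAddOne {n : ℕ} (i : Fin (n+1)) :
    ((i+1 : Fin (n+1)) : ℕ) = if (i:ℕ) = n then 0 else (i:ℕ)+1 := by
  rw [Fin.val_add_one]
  by_cases h : i = Fin.last n
  · simp [h]
  · rw [if_neg h, if_neg (by simpa [Fin.ext_iff] using h)]

lemma rot_aux {n : ℕ} (hn : 2 ≤ n) (j : Fin (n+1)) (t : Fin n) :
    (j.succAbove (finRotate n t) = finRotate (n+1) (j.succAbove t) ∧ finRotate (n+1) (j.succAbove t) ≠ j)
  ∨ (finRotate (n+1) (j.succAbove t) = j ∧ j.succAbove (finRotate n t) = finRotate (n+1) j) := by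
  obtain ⟨m, rfl⟩ : ∃ m, n = m+2 := ⟨n-2, by omega⟩
  simp only [finRotate_succ_apply, ne_eq, Fin.ext_iff]
  have e1 := valSuccAbove j t
  have e2 := valSuccAbove j (t+1)
  have vt := valAddOne t
  rw [vt] at e2
  have e3 := valAddOne (j.succAbove t)
  rw [e1] at e3
  have e4 := valAddOne j
  rw [e2, e3, e4]
  have hj := j.isLt; have ht := t.isLt
  split_ifs <;> omega

lemma mk2cycle (T : Finset (Finset V)) {k : ℕ} (x : Fin k → V) (p q : Fin k) (hpq : p < q)
    (y₁ y₂ : V) (h12 : y₁ ≠ y₂) (h1p : y₁ ≠ x p) (h1q : y₁ ≠ x q) (h2p : y₂ ≠ x p)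
    (h2q : y₂ ≠ x q) (hxpq : x p ≠ x q)
    (hA : insert y₁ ({x p, x q} : Finset V) ∈ T) (hB : insert y₂ ({x p, x q} : Finset V) ∈ T) :
    ∃ (m : ℕ) (φ : Fin m → Fin k), StrictMono φ ∧ IsCycle T (x ∘ φ) := by
  have himg : Finset.univ.image (x ∘ ![p, q]) = ({x p, x q} : Finset V) := by
    rw [show (Finset.univ : Finset (Fin 2)) = {0, 1} from rfl]
    simp
  refine ⟨2, ![p, q], ?_, Or.inr ⟨rfl, ?_, y₁, y₂, h12, ?_, ?_, ?_, ?_⟩⟩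
  · intro s t hst
    fin_cases s <;> fin_cases t <;> simp_all
  · intro s t hst
    fin_cases s <;> fin_cases t <;> simp_all [Fin.ext_iff]
  · intro s; fin_cases s <;> simpa using by assumption
  · intro s; fin_cases s <;> simpa using by assumption
  · rw [himg]; exact hA
  · rw [himg]; exact hB

lemma main_lemma (T : Finset (Finset V)) (hT : ∀ h ∈ T, h.card = 3) :
    ∀ (k : ℕ) (x : Fin k → V), IsWeakCycle T x →
      ∃ (m : ℕ) (φ : Fin m → Fin k), StrictMono φ ∧ IsCycle T (x ∘ φ) := by
  intro k
  induction k using Nat.strong_induction_on with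
  | _ k IH =>
  intro x hwx
  obtain ⟨hk3, hinj, hadj, hlast⟩ := hwx
  by_cases hA : ∀ i : Fin k,
      ({x i, x (finRotate k i), x (finRotate k (finRotate k i))} : Finset V) ∉ T
  · exact ⟨k, id, strictMono_id, Or.inl ⟨hk3, ⟨hk3, hinj, hadj, hlast⟩, hA⟩⟩
  push_neg at hA
  obtain ⟨i, hi⟩ := hA
  rcases eq_or_lt_of_le hk3 with hk3' | hk4
  · -- k = 3 : contradiction
    exfalso
    subst hk3'
    have hu : ∀ w : Fin 3, ({w, finRotate 3 w, finRotate 3 (finRotate 3 w)} : Finset (Fin 3))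
        = Finset.univ := by decide
    have himg : ({x i, x (finRotate 3 i), x (finRotate 3 (finRotate 3 i))} : Finset V)
        = Finset.univ.image x := by
      rw [show Finset.univ.image x = Finset.image x Finset.univ from rfl, ← hu i]
      simp
    rw [himg] at hi
    exact (hlast.resolve_left (by omega)) hi
  -- k ≥ 4
  obtain ⟨n, rfl⟩ : ∃ n, k = n + 1 := ⟨k - 1, by omega⟩
  have hn : 3 ≤ n := by omega
  rw [finRotate_succ_apply, finRotate_succ_apply] at hi
  have hφmono : StrictMono ((i+1).succAbove : Fin n → Fin (n+1)) := Fin.strictMono_succAbove _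
  have hφinj : Function.Injective (x ∘ (i+1).succAbove) :=
    hinj.comp Fin.succAbove_right_injective
  have hii2 : i ≠ i + 1 + 1 := by
    have h1 := valAddOne i
    have h2 := valAddOne (i+1)
    rw [h1] at h2
    have := i.isLt
    simp only [ne_eq, Fin.ext_iff]
    split_ifs at h2 <;> omega
  by_cases hS : Finset.univ.image (x ∘ (i+1).succAbove) ∈ T
  · -- degenerate: n = 3, produce a 2-cycle
    have hcard : (Finset.univ.image (x ∘ (i+1).succAbove)).card = n := by
      rw [Finset.card_image_of_injective _ hφinj, Finset.card_univ, Fintype.card_fin]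
    have hn3 : n = 3 := by rw [hT _ hS] at hcard; omega
    subst hn3
    have hSimg : ({x (i+1+1+1), x i, x (i+1+1)} : Finset V) ∈ T := by
      have himg4 : Finset.univ.image ((i+1).succAbove : Fin 3 → Fin 4)
          = ({i+1+1+1, i, i+1+1} : Finset (Fin 4)) := by
        have : ∀ w : Fin (3+1), Finset.univ.image ((w+1).succAbove)
            = ({w+1+1+1, w, w+1+1} : Finset (Fin 4)) := by decide
        exact this i
      have : Finset.univ.image (x ∘ (i+1).succAbove)
          = ({x (i+1+1+1), x i, x (i+1+1)} : Finset V) := by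
        rw [← Finset.image_image, himg4]
        simp
      rwa [this] at hS
    have hAmem : insert (x (i+1)) ({x i, x (i+1+1)} : Finset V) ∈ T := by
      have : insert (x (i+1)) ({x i, x (i+1+1)} : Finset V)
          = ({x i, x (i+1), x (i+1+1)} : Finset V) := by
        rw [Finset.insert_comm]
      rwa [this]
    have hBmem : insert (x (i+1+1+1)) ({x i, x (i+1+1)} : Finset V) ∈ T := hSimg
    have hD : ∀ w : Fin 4, w + 1 ≠ w ∧ w + 1 ≠ w + 1 + 1 ∧ w + 1 + 1 + 1 ≠ w ∧
        w + 1 + 1 + 1 ≠ w + 1 + 1 ∧ w + 1 ≠ w + 1 + 1 + 1 := by decide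
    obtain ⟨d1, d2, d3, d4, d5⟩ := hD i
    have hxne : x i ≠ x (i+1+1) := fun h => hii2 (hinj h)
    rcases lt_or_gt_of_ne hii2 with hlt | hlt
    · exact mk2cycle T x i (i+1+1) hlt (x (i+1)) (x (i+1+1+1))
        (fun h => d5 (hinj h)) (fun h => d1 (hinj h)) (fun h => d2 (hinj h))
        (fun h => d3 (hinj h)) (fun h => d4 (hinj h)) hxne hAmem hBmem
    · have := mk2cycle T x (i+1+1) i hlt (x (i+1)) (x (i+1+1+1))
        (fun h => d5 (hinj h)) (fun h => d2 (hinj h)) (fun h => d1 (hinj h))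
        (fun h => d4 (hinj h)) (fun h => d3 (hinj h)) (Ne.symm hxne) ?_ ?_
      · exact this
      · rwa [Finset.pair_comm]
      · rwa [Finset.pair_comm]
  · -- shorten the cycle by dropping x (i+1)
    have hwc : IsWeakCycle T (x ∘ (i+1).succAbove) := by
      refine ⟨hn, hφinj, ?_, ?_⟩
      · intro t
        rcases rot_aux (by omega) (i+1) t with ⟨h1, h2⟩ | ⟨h1, h2⟩
        · show Adjacent T (x ((i+1).succAbove t)) (x ((i+1).succAbove (finRotate n t)))
          rw [h1]
          exact hadj ((i+1).succAbove t)
        · show Adjacent T (x ((i+1).succAbove t)) (x ((i+1).succAbove (finRotate n t)))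
          have hφt : (i+1).succAbove t = i := by
            rw [finRotate_succ_apply] at h1
            exact add_right_cancel h1
          rw [h2, hφt, finRotate_succ_apply]
          refine ⟨fun h => hii2 (hinj h), _, hi, ?_, ?_⟩
          · exact Finset.mem_insert_self _ _
          · simp
      · rcases lt_or_eq_of_le hn with h | h
        · exact Or.inl h
        · exact Or.inr hS
    obtain ⟨m, ψ, hψ, hcyc⟩ := IH n (by omega) (x ∘ (i+1).succAbove) hwc
    exact ⟨m, (i+1).succAbove ∘ ψ, hφmono.comp hψ, hcyc⟩

/-- Every weak cycle contains a (not necessarily contiguous) subsequence that is a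
cycle.  Consequently, a hypergraph with no cycles has no weak cycles. -/
theorem stmt2 (T : Finset (Finset V)) (hT : ∀ h ∈ T, h.card = 3) :
    (∀ (k : ℕ) (x : Fin k → V), IsWeakCycle T x →
      ∃ (m : ℕ) (φ : Fin m → Fin k), StrictMono φ ∧ IsCycle T (x ∘ φ)) ∧
    ((∀ (m : ℕ) (y : Fin m → V), ¬ IsCycle T y) →
      ∀ (k : ℕ) (x : Fin k → V), ¬ IsWeakCycle T x) := by
  refine ⟨main_lemma T hT, ?_⟩
  intro hnc k x hwx
  obtain ⟨m, φ, -, hc⟩ := main_lemma T hT k x hwx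
  exact hnc m (x ∘ φ) hc
end

section
/- In an l-modest hypergraph with 3 ≤ k ≤ l, the 2k vertices of any witnessed cycle x_1,...,x_k,y_1,...,y_k form a dense set of cardinality 2k; in particular, the k hyperedges {x_i, x_{i+1}, y_i} (indices mod k) are pairwise distinct. -/
variable {V : Type*} [DecidableEq V] [Fintype V]

/-! The `k` witness edges `{x_i, x_{i+1}, y_i}` are pairwise distinct, and all lie in the set
`X` of the at most `2k` cycle and witness vertices. So `[X] ≥ k ≥ ‖X‖ / 2`, while modesty gives
`‖X‖ ≥ 2[X]`; hence equality throughout. -/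

theorem finRotate_apply_ne_self {k : ℕ} (hk : 2 ≤ k) (i : Fin k) : finRotate k i ≠ i := by
  obtain ⟨n, rfl⟩ := Nat.exists_eq_add_of_le' hk
  rw [finRotate_apply, Ne, add_eq_left, Fin.ext_iff]
  simp

theorem finRotate_finRotate_apply_ne_self {k : ℕ} (hk : 3 ≤ k) (i : Fin k) :
    finRotate k (finRotate k i) ≠ i := by
  obtain ⟨n, rfl⟩ := Nat.exists_eq_add_of_le' hk
  rw [finRotate_apply, finRotate_apply, add_assoc, Ne, add_eq_left, Fin.ext_iff]
  simp [Fin.val_add, Nat.mod_eq_of_lt]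

section WitnessedCycle

variable {ι α : Type*} [DecidableEq α] {T : Finset (Finset α)} {σ : Equiv.Perm ι}
  {x y : ι → α}

theorem witness_edge_ne_next (hT : ∀ h ∈ T, h.card = 3)
    (hσσ : ∀ i, σ (σ i) ≠ i) (hx : Function.Injective x)
    (hnotriple : ∀ i, ({x i, x (σ i), x (σ (σ i))} : Finset α) ∉ T)
    (hwit : ∀ i, ({x i, x (σ i), y i} : Finset α) ∈ T) (i : ι) :
    ({x i, x (σ i), y i} : Finset α) ≠ {x (σ i), x (σ (σ i)), y (σ i)} := by
  intro he
  have hσ : σ i ≠ i := fun h => hσσ i (by rw [h, h])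
  have hsub : ({x i, x (σ i), x (σ (σ i))} : Finset α) ⊆ {x i, x (σ i), y i} := by
    have : x (σ (σ i)) ∈ ({x i, x (σ i), y i} : Finset α) := by rw [he]; simp
    simp [Finset.insert_subset_iff, this]
  have htriple_card : ({x i, x (σ i), x (σ (σ i))} : Finset α).card = 3 := by
    rw [Finset.card_eq_three]
    exact ⟨_, _, _, hx.ne hσ.symm, hx.ne (hσσ i).symm, hx.ne (σ.injective.ne hσ.symm), rfl⟩
  refine hnotriple i ?_
  rw [Finset.eq_of_subset_of_card_le hsub (by rw [hT _ (hwit i), htriple_card])]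
  exact hwit i

/- Two equal witness edges at consecutive indices would contain three consecutive cycle
vertices; at non-consecutive indices `i, j`, both `x j` and `x (σ j)` would be the witness `y i`. -/
theorem witness_edge_injective (hT : ∀ h ∈ T, h.card = 3) (hσ : ∀ i, σ i ≠ i)
    (hσσ : ∀ i, σ (σ i) ≠ i) (hx : Function.Injective x)
    (hnotriple : ∀ i, ({x i, x (σ i), x (σ (σ i))} : Finset α) ∉ T)
    (hwit : ∀ i, ({x i, x (σ i), y i} : Finset α) ∈ T) :
    Function.Injective (fun i => ({x i, x (σ i), y i} : Finset α)) := by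
  intro i j he
  simp only at he
  by_contra hij
  by_cases hj : j = σ i
  · subst hj
    exact witness_edge_ne_next hT hσσ hx hnotriple hwit i he
  by_cases hi : i = σ j
  · subst hi
    exact witness_edge_ne_next hT hσσ hx hnotriple hwit j he.symm
  have hxj : x j = y i := by
    have : x j ∈ ({x i, x (σ i), y i} : Finset α) := by rw [he]; simp
    simpa [hx.ne (Ne.symm hij), hx.ne hj] using this
  have hxσj : x (σ j) = y i := by
    have : x (σ j) ∈ ({x i, x (σ i), y i} : Finset α) := by rw [he]; simp
    simpa [hx.ne (Ne.symm hi), hx.ne (σ.injective.ne (Ne.symm hij))] using this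
  exact hσ j (hx (hxσj.trans hxj.symm))

end WitnessedCycle

omit [Fintype V] in
theorem card_le_hWeight_of_injective {ι : Type*} [Fintype ι] {T : Finset (Finset V)}
    {X : Finset V} {e : ι → Finset V} (he : Function.Injective e) (heT : ∀ i, e i ∈ T)
    (heX : ∀ i, e i ⊆ X) : Fintype.card ι ≤ hWeight T X :=
  Finset.card_le_card_of_injOn e (fun i _ => Finset.mem_filter.mpr ⟨heT i, heX i⟩)
    he.injOn

omit [Fintype V] in
theorem HModest.card_eq_and_dense {T : Finset (Finset V)} {l m : ℕ} (hmodest : HModest T l)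
    (hml : m ≤ l) {X : Finset V} (hX : X.card ≤ 2 * m) (hW : m ≤ hWeight T X) :
    X.card = 2 * m ∧ HDense T X := by
  have hnot := hmodest X (by omega)
  unfold HSuperDense at hnot
  unfold HDense
  omega

theorem stmt3_general (T : Finset (Finset V)) (hT : ∀ h ∈ T, h.card = 3) (l k : ℕ)
    (hmodest : HModest T l) (h3 : 3 ≤ k) (hkl : k ≤ l)
    (x y : Fin k → V) (hinj : Function.Injective x)
    (hnotriple : ∀ i : Fin k,
      ({x i, x (finRotate k i), x (finRotate k (finRotate k i))} : Finset V) ∉ T)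
    (hwit : ∀ i : Fin k, ({x i, x (finRotate k i), y i} : Finset V) ∈ T) :
    (Finset.univ.image x ∪ Finset.univ.image y).card = 2 * k ∧
    HDense T (Finset.univ.image x ∪ Finset.univ.image y) ∧
    Function.Injective
      (fun i : Fin k => ({x i, x (finRotate k i), y i} : Finset V)) := by
  set X := Finset.univ.image x ∪ Finset.univ.image y
  have hedges := witness_edge_injective hT
    (finRotate_apply_ne_self (by omega)) (finRotate_finRotate_apply_ne_self h3) hinj
    hnotriple hwit
  have hX : X.card ≤ 2 * k := by
    calc X.card ≤ (Finset.univ.image x).card + (Finset.univ.image y).card :=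
          Finset.card_union_le _ _
      _ ≤ k + k := by gcongr <;> exact Finset.card_image_le.trans (by simp)
      _ = 2 * k := by ring
  have hW : k ≤ hWeight T X := by
    simpa using card_le_hWeight_of_injective hedges hwit fun i => by
      simp [Finset.insert_subset_iff, X]
  obtain ⟨hcard, hdense⟩ := hmodest.card_eq_and_dense hkl hX hW
  exact ⟨hcard, hdense, hedges⟩

/-- In an `l`-modest hypergraph with `3 ≤ k ≤ l`, the `2k` vertices of any witnessed
cycle `x₁,…,x_k,y₁,…,y_k` form a dense set of cardinality `2k`; in particular the `k`
hyperedges `{x_i, x_{i+1}, y_i}` are pairwise distinct. -/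
theorem stmt3 (T : Finset (Finset V)) (hT : ∀ h ∈ T, h.card = 3) (l k : ℕ)
    (hmodest : HModest T l) (h3 : 3 ≤ k) (hkl : k ≤ l)
    (x y : Fin k → V) (hinj : Function.Injective x)
    (hadj : ∀ i : Fin k, Adjacent T (x i) (x (finRotate k i)))
    (hnotriple : ∀ i : Fin k,
      ({x i, x (finRotate k i), x (finRotate k (finRotate k i))} : Finset V) ∉ T)
    (hwit : ∀ i : Fin k, ({x i, x (finRotate k i), y i} : Finset V) ∈ T) :
    (Finset.univ.image x ∪ Finset.univ.image y).card = 2 * k ∧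
    HDense T (Finset.univ.image x ∪ Finset.univ.image y) ∧
    Function.Injective
      (fun i : Fin k => ({x i, x (finRotate k i), y i} : Finset V)) :=
  stmt3_general T hT l k hmodest h3 hkl x y hinj hnotriple hwit
end

section
/- In an l-modest hypergraph (l ≥ 2), any two distinct red blocks (minimal dense vertex sets of cardinality ≤ 2l) are disjoint, under the assumption that the hypergraph is (2l+2)-modest. -/
variable {V : Type*} [DecidableEq V] [Fintype V]

/-- A red block: a minimal (nonempty) dense vertex set of cardinality `≤ 2l`. -/
def RedBlock (T : Finset (Finset V)) (l : ℕ) (X : Finset V) : Prop :=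
  X.Nonempty ∧ X.card ≤ 2 * l ∧ HDense T X ∧
    ∀ Y : Finset V, Y ⊂ X → Y.Nonempty → ¬ HDense T Y

/-- A vertex is red if it belongs to some red block. -/
def RedVertex (T : Finset (Finset V)) (l : ℕ) (x : V) : Prop :=
  ∃ X : Finset V, RedBlock T l X ∧ x ∈ X

/-- In a `(2l+2)`-modest hypergraph (`l ≥ 2`), distinct red blocks are disjoint. -/
theorem stmt6 (T : Finset (Finset V)) (hT : ∀ h ∈ T, h.card = 3) (l : ℕ)
    (hl : 2 ≤ l) (hmodest : HModest T (2 * l + 2))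
    (X Y : Finset V) (hX : RedBlock T l X) (hY : RedBlock T l Y) (hXY : X ≠ Y) :
    Disjoint X Y := by
  by_contra hdisj
  rw [Finset.not_disjoint_iff_nonempty_inter] at hdisj
  obtain ⟨hXne, hXcard, hXdense, hXmin⟩ := hX
  obtain ⟨hYne, hYcard, hYdense, hYmin⟩ := hY
  -- submodularity of weight
  have hsub : hWeight T X + hWeight T Y ≤ hWeight T (X ∪ Y) + hWeight T (X ∩ Y) := by
    have h1 : T.filter (· ⊆ X) ∪ T.filter (· ⊆ Y) ⊆ T.filter (· ⊆ X ∪ Y) := by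
      intro h hh
      simp only [Finset.mem_union, Finset.mem_filter] at hh ⊢
      rcases hh with ⟨h1, h2⟩ | ⟨h1, h2⟩
      · exact ⟨h1, h2.trans Finset.subset_union_left⟩
      · exact ⟨h1, h2.trans Finset.subset_union_right⟩
    have h2 : T.filter (· ⊆ X) ∩ T.filter (· ⊆ Y) = T.filter (· ⊆ X ∩ Y) := by
      ext h
      simp only [Finset.mem_inter, Finset.mem_filter, Finset.subset_inter_iff]
      tauto
    have := Finset.card_union_add_card_inter (T.filter (· ⊆ X)) (T.filter (· ⊆ Y))
    have hc := Finset.card_le_card h1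
    unfold hWeight
    rw [h2] at this
    omega
  have hcards : (X ∪ Y).card + (X ∩ Y).card = X.card + Y.card :=
    Finset.card_union_add_card_inter X Y
  have hUcard : (X ∪ Y).card ≤ 2 * (2 * l + 2) := by omega
  have hns := hmodest (X ∪ Y) hUcard
  unfold HSuperDense at hns
  unfold HDense at hXdense hYdense
  have hIdense : HDense T (X ∩ Y) := by
    unfold HDense
    omega
  -- X ∩ Y is a nonempty dense subset of X, so by minimality X ∩ Y = X
  have hIX : X ∩ Y ⊆ X := Finset.inter_subset_left
  have hIeq : X ∩ Y = X := by
    by_contra hne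
    exact hXmin (X ∩ Y) (ssubset_of_subset_of_ne hIX hne) hdisj hIdense
  have hXssY : X ⊂ Y := by
    refine ssubset_of_subset_of_ne ?_ hXY
    intro a ha
    have : a ∈ X ∩ Y := by rw [hIeq]; exact ha
    exact (Finset.mem_inter.mp this).2
  exact hYmin X hXssY hXne hXdense
end

section
/- In a (2l+2)-modest hypergraph (l ≥ 2), any two adjacent red vertices belong to the same red block. -/
variable {V : Type*} [DecidableEq V] [Fintype V]

lemma hWeight_supermod (T : Finset (Finset V)) (X Y : Finset V) :
    hWeight T X + hWeight T Y ≤ hWeight T (X ∪ Y) + hWeight T (X ∩ Y) := by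
  unfold hWeight
  have h1 : T.filter (· ⊆ X) ∪ T.filter (· ⊆ Y) ⊆ T.filter (· ⊆ X ∪ Y) := by
    intro e he
    simp only [Finset.mem_union, Finset.mem_filter] at he ⊢
    rcases he with ⟨he, hs⟩ | ⟨he, hs⟩
    · exact ⟨he, hs.trans Finset.subset_union_left⟩
    · exact ⟨he, hs.trans Finset.subset_union_right⟩
  have h2 : T.filter (· ⊆ X) ∩ T.filter (· ⊆ Y) = T.filter (· ⊆ X ∩ Y) := by
    ext e
    simp only [Finset.mem_inter, Finset.mem_filter, Finset.subset_inter_iff]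
    tauto
  have h3 := Finset.card_union_add_card_inter (T.filter (· ⊆ X)) (T.filter (· ⊆ Y))
  have h4 := Finset.card_le_card h1
  rw [h2] at h3
  omega

/-- In a `(2l+2)`-modest hypergraph (`l ≥ 2`), adjacent red vertices belong to the
same red block. -/
theorem stmt7 (T : Finset (Finset V)) (hT : ∀ h ∈ T, h.card = 3) (l : ℕ)
    (hl : 2 ≤ l) (hmodest : HModest T (2 * l + 2))
    (x y : V) (hx : RedVertex T l x) (hy : RedVertex T l y)
    (hadj : Adjacent T x y) :
    ∃ B : Finset V, RedBlock T l B ∧ x ∈ B ∧ y ∈ B := by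
  obtain ⟨X, hX, hxX⟩ := hx
  obtain ⟨Y, hY, hyY⟩ := hy
  by_cases hyX : y ∈ X
  · exact ⟨X, hX, hxX, hyX⟩
  by_cases hxY : x ∈ Y
  · exact ⟨Y, hY, hxY, hyY⟩
  exfalso
  obtain ⟨hXne, hXcard, hXdense, hXmin⟩ := hX
  obtain ⟨hYne, hYcard, hYdense, hYmin⟩ := hY
  obtain ⟨hxy, e, heT, hxe, hye⟩ := hadj
  -- X and Y are disjoint
  have hdisj : X ∩ Y = ∅ := by
    by_contra hne
    have hne' : (X ∩ Y).Nonempty := Finset.nonempty_iff_ne_empty.mpr hne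
    have hXYcard : (X ∪ Y).card ≤ 2 * (2 * l + 2) := by
      have := Finset.card_union_le X Y; omega
    have hnotsd := hmodest (X ∪ Y) hXYcard
    unfold HSuperDense at hnotsd
    push_neg at hnotsd
    have hsm := hWeight_supermod T X Y
    have hcard := Finset.card_union_add_card_inter X Y
    have hdense' : HDense T (X ∩ Y) := by
      unfold HDense at *; omega
    rcases (Finset.inter_subset_left : X ∩ Y ⊆ X).ssubset_or_eq with
      hss | heq
    · exact hXmin _ hss hne' hdense'
    · have hXY : X ⊆ Y := by rw [← heq]; exact Finset.inter_subset_right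
      exact hxY (hXY hxX)
  -- the combined set W
  set W := X ∪ Y ∪ e with hW
  have hsubW : T.filter (· ⊆ X) ∪ T.filter (· ⊆ Y) ∪ {e} ⊆ T.filter (· ⊆ W) := by
    intro f hf
    simp only [Finset.mem_union, Finset.mem_filter, Finset.mem_singleton] at hf ⊢
    rcases hf with (⟨hfT, hfs⟩ | ⟨hfT, hfs⟩) | rfl
    · exact ⟨hfT, hfs.trans (Finset.subset_union_left.trans Finset.subset_union_left)⟩
    · exact ⟨hfT, hfs.trans (Finset.subset_union_right.trans Finset.subset_union_left)⟩
    · exact ⟨heT, Finset.subset_union_right⟩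
  have hd1 : Disjoint (T.filter (· ⊆ X)) (T.filter (· ⊆ Y)) := by
    rw [Finset.disjoint_left]
    intro f hf1 hf2
    simp only [Finset.mem_filter] at hf1 hf2
    have : f ⊆ X ∩ Y := Finset.subset_inter hf1.2 hf2.2
    rw [hdisj] at this
    have := Finset.card_le_card this
    simp [hT f hf1.1] at this
  have hd2 : Disjoint (T.filter (· ⊆ X) ∪ T.filter (· ⊆ Y)) ({e} : Finset (Finset V)) := by
    rw [Finset.disjoint_right]
    intro f hf1 hf2
    simp only [Finset.mem_singleton] at hf1
    subst hf1
    simp only [Finset.mem_union, Finset.mem_filter] at hf2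
    rcases hf2 with ⟨_, hfs⟩ | ⟨_, hfs⟩
    · exact hyX (hfs hye)
    · exact hxY (hfs hxe)
  have hWw : hWeight T X + hWeight T Y + 1 ≤ hWeight T W := by
    have h1 := Finset.card_le_card hsubW
    rw [Finset.card_union_of_disjoint hd2, Finset.card_union_of_disjoint hd1] at h1
    simpa [hWeight] using h1
  -- cardinality bound for W
  have hWcard : W.card ≤ X.card + Y.card + 1 := by
    have hsplit : W = (X ∪ Y) ∪ (e \ (X ∪ Y)) := by
      rw [hW, Finset.union_sdiff_self_eq_union]
    have hd : Disjoint (X ∪ Y) (e \ (X ∪ Y)) := Finset.disjoint_sdiff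
    have h1 : W.card = (X ∪ Y).card + (e \ (X ∪ Y)).card := by
      rw [hsplit, Finset.card_union_of_disjoint hd]
    have h2 : e \ (X ∪ Y) ⊆ e \ {x, y} := by
      apply Finset.sdiff_subset_sdiff (le_refl e)
      intro v hv
      simp only [Finset.mem_insert, Finset.mem_singleton] at hv
      rcases hv with rfl | rfl
      · exact Finset.mem_union_left _ hxX
      · exact Finset.mem_union_right _ hyY
    have h3 : ({x, y} : Finset V) ⊆ e := by
      intro v hv
      simp only [Finset.mem_insert, Finset.mem_singleton] at hv
      rcases hv with rfl | rfl
      · exact hxe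
      · exact hye
    have h4 : (e \ {x, y}).card = 1 := by
      rw [Finset.card_sdiff_of_subset h3, hT e heT, Finset.card_insert_of_notMem (by simpa using hxy),
        Finset.card_singleton]
    have h5 := Finset.card_le_card h2
    have h6 := Finset.card_union_le X Y
    omega
  have hWsmall : W.card ≤ 2 * (2 * l + 2) := by omega
  have := hmodest W hWsmall
  unfold HSuperDense at this
  unfold HDense at hXdense hYdense
  omega
end

section
/- In a (2l+2)-modest hypergraph (l ≥ 2), no green vertex is adjacent to two different red vertices. -/
variable {V : Type*} [DecidableEq V] [Fintype V]

lemma redblocks_disjoint (T : Finset (Finset V)) (hT : ∀ h ∈ T, h.card = 3) (l : ℕ)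
    (hmodest : HModest T (2 * l + 2)) {X X' : Finset V}
    (hX : RedBlock T l X) (hX' : RedBlock T l X') (hne : X ≠ X') :
    Disjoint X X' := by
  by_contra hd
  obtain ⟨hXne, hXc, hXd, hXmin⟩ := hX
  obtain ⟨hX'ne, hX'c, hX'd, hX'min⟩ := hX'
  set W := X ∩ X' with hW
  have hWne : W.Nonempty := Finset.not_disjoint_iff_nonempty_inter.mp hd
  by_cases h1 : X ⊆ X'
  · exact hX'min X (Finset.ssubset_iff_subset_ne.mpr ⟨h1, hne⟩) hXne hXd
  have hWss : W ⊂ X := by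
    refine Finset.ssubset_iff_subset_ne.mpr ⟨Finset.inter_subset_left, ?_⟩
    intro h
    exact h1 (Finset.inter_eq_left.mp h)
  have hWnd : ¬ HDense T W := hXmin W hWss hWne
  unfold HDense at hWnd hXd hX'd
  push_neg at hWnd
  have hcard : (X ∪ X').card + W.card = X.card + X'.card :=
    Finset.card_union_add_card_inter X X'
  have hw : hWeight T X + hWeight T X' ≤ hWeight T (X ∪ X') + hWeight T W := by
    have h3 : (T.filter (· ⊆ X) ∪ T.filter (· ⊆ X')).card
        + (T.filter (· ⊆ X) ∩ T.filter (· ⊆ X')).card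
        = (T.filter (· ⊆ X)).card + (T.filter (· ⊆ X')).card :=
      Finset.card_union_add_card_inter _ _
    have h4 : (T.filter (· ⊆ X) ∪ T.filter (· ⊆ X')).card ≤ hWeight T (X ∪ X') := by
      apply Finset.card_le_card
      intro g hg
      simp only [Finset.mem_union, Finset.mem_filter] at hg ⊢
      rcases hg with ⟨hg1, hg2⟩ | ⟨hg1, hg2⟩
      · exact ⟨hg1, hg2.trans Finset.subset_union_left⟩
      · exact ⟨hg1, hg2.trans Finset.subset_union_right⟩
    have h5 : (T.filter (· ⊆ X) ∩ T.filter (· ⊆ X')).card ≤ hWeight T W := by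
      apply Finset.card_le_card
      intro g hg
      simp only [Finset.mem_inter, Finset.mem_filter] at hg ⊢
      exact ⟨hg.1.1, Finset.subset_inter hg.1.2 hg.2.2⟩
    have e1 : hWeight T X = (T.filter (· ⊆ X)).card := rfl
    have e2 : hWeight T X' = (T.filter (· ⊆ X')).card := rfl
    omega
  have hsd : HSuperDense T (X ∪ X') := by
    unfold HSuperDense
    omega
  exact hmodest (X ∪ X') (by
    have := Finset.card_union_le X X'
    omega) hsd

/-- In a `(2l+2)`-modest hypergraph (`l ≥ 2`), no green vertex is adjacent to two
different red vertices. -/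
theorem stmt8 (T : Finset (Finset V)) (hT : ∀ h ∈ T, h.card = 3) (l : ℕ)
    (hl : 2 ≤ l) (hmodest : HModest T (2 * l + 2))
    (b x x' : V) (hb : ¬ RedVertex T l b) (hx : RedVertex T l x)
    (hx' : RedVertex T l x') (hne : x ≠ x') :
    ¬ (Adjacent T b x ∧ Adjacent T b x') := by
  rintro ⟨⟨hbx, e, heT, hbe, hxe⟩, ⟨hbx', f, hfT, hbf, hx'f⟩⟩
  obtain ⟨X, hXrb, hxX⟩ := hx
  obtain ⟨X', hX'rb, hx'X'⟩ := hx'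
  have hbX : b ∉ X := fun h => hb ⟨X, hXrb, h⟩
  have hbX' : b ∉ X' := fun h => hb ⟨X', hX'rb, h⟩
  set S := X ∪ X' with hSdef
  have hbS : b ∉ S := by
    simp only [hSdef, Finset.mem_union]
    tauto
  have hxS : x ∈ S := Finset.mem_union_left _ hxX
  have hx'S : x' ∈ S := Finset.mem_union_right _ hx'X'
  -- S is dense and small
  have hSkey : S.card ≤ 2 * hWeight T S ∧ S.card ≤ 4 * l := by
    by_cases hXX : X = X'
    · subst hXX
      have hS : S = X := Finset.union_self X
      rw [hS]
      obtain ⟨_, hXc, hXd, _⟩ := hXrb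
      exact ⟨hXd, by omega⟩
    · have hdj := redblocks_disjoint T hT l hmodest hXrb hX'rb hXX
      obtain ⟨_, hXc, hXd, _⟩ := hXrb
      obtain ⟨_, hX'c, hX'd, _⟩ := hX'rb
      have hcard : S.card = X.card + X'.card := Finset.card_union_of_disjoint hdj
      have hwsum : hWeight T X + hWeight T X' ≤ hWeight T S := by
        have hdjf : Disjoint (T.filter (· ⊆ X)) (T.filter (· ⊆ X')) := by
          rw [Finset.disjoint_left]
          intro g hg1 hg2
          simp only [Finset.mem_filter] at hg1 hg2
          have : g ⊆ X ∩ X' := Finset.subset_inter hg1.2 hg2.2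
          have h0 : g = ∅ := Finset.subset_empty.mp
            (this.trans (by rw [Finset.disjoint_iff_inter_eq_empty.mp hdj]))
          have := hT g hg1.1
          rw [h0] at this
          simp at this
        have hsub : T.filter (· ⊆ X) ∪ T.filter (· ⊆ X') ⊆ T.filter (· ⊆ S) := by
          intro g hg
          simp only [Finset.mem_union, Finset.mem_filter] at hg ⊢
          rcases hg with ⟨hg1, hg2⟩ | ⟨hg1, hg2⟩
          · exact ⟨hg1, hg2.trans Finset.subset_union_left⟩
          · exact ⟨hg1, hg2.trans Finset.subset_union_right⟩
        calc hWeight T X + hWeight T X'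
            = (T.filter (· ⊆ X) ∪ T.filter (· ⊆ X')).card :=
              (Finset.card_union_of_disjoint hdjf).symm
          _ ≤ (T.filter (· ⊆ S)).card := Finset.card_le_card hsub
      unfold HDense at hXd hX'd
      exact ⟨by omega, by omega⟩
  obtain ⟨hSd, hSc⟩ := hSkey
  -- the big set Z
  set Z := S ∪ (e ∪ f) with hZdef
  have heZ : e ⊆ Z := fun a ha => Finset.mem_union_right _ (Finset.mem_union_left _ ha)
  have hfZ : f ⊆ Z := fun a ha => Finset.mem_union_right _ (Finset.mem_union_right _ ha)
  have hSZ : S ⊆ Z := Finset.subset_union_left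
  have heS : ¬ e ⊆ S := fun h => hbS (h hbe)
  have hfS : ¬ f ⊆ S := fun h => hbS (h hbf)
  -- weight of Z
  have hCsub : T.filter (· ⊆ S) ∪ {e, f} ⊆ T.filter (· ⊆ Z) := by
    intro g hg
    simp only [Finset.mem_union, Finset.mem_filter, Finset.mem_insert,
      Finset.mem_singleton] at hg ⊢
    rcases hg with ⟨hg1, hg2⟩ | rfl | rfl
    · exact ⟨hg1, hg2.trans hSZ⟩
    · exact ⟨heT, heZ⟩
    · exact ⟨hfT, hfZ⟩
  have hCdj : Disjoint (T.filter (· ⊆ S)) ({e, f} : Finset (Finset V)) := by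
    rw [Finset.disjoint_right]
    intro g hg1 hg2
    simp only [Finset.mem_insert, Finset.mem_singleton] at hg1
    simp only [Finset.mem_filter] at hg2
    rcases hg1 with rfl | rfl
    · exact heS hg2.2
    · exact hfS hg2.2
  have hwZ : hWeight T S + ({e, f} : Finset (Finset V)).card ≤ hWeight T Z := by
    calc hWeight T S + ({e, f} : Finset (Finset V)).card
        = (T.filter (· ⊆ S) ∪ {e, f}).card := (Finset.card_union_of_disjoint hCdj).symm
      _ ≤ (T.filter (· ⊆ Z)).card := Finset.card_le_card hCsub
  by_cases hef : e = f
  · -- e = f = {b, x, x'}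
    subst hef
    have hcard2 : ((insert b {x, x'} : Finset V)).card = 3 := by
      rw [Finset.card_insert_of_notMem (by simp only [Finset.mem_insert, Finset.mem_singleton]; push_neg; exact ⟨hbx, hbx'⟩),
        Finset.card_pair hne]
    have hbxx' : (insert b {x, x'} : Finset V) = e := by
      apply Finset.eq_of_subset_of_card_le
      · intro a ha
        simp only [Finset.mem_insert, Finset.mem_singleton] at ha
        rcases ha with rfl | rfl | rfl
        · exact hbe
        · exact hxe
        · exact hx'f
      · rw [hT e heT, hcard2]
    have hZsub : Z ⊆ insert b S := by
      intro a ha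
      rw [hZdef] at ha
      simp only [Finset.union_self, Finset.mem_union] at ha
      rcases ha with ha | ha
      · exact Finset.mem_insert_of_mem ha
      · rw [← hbxx'] at ha
        simp only [Finset.mem_insert, Finset.mem_singleton] at ha
        rcases ha with rfl | rfl | rfl
        · exact Finset.mem_insert_self _ _
        · exact Finset.mem_insert_of_mem hxS
        · exact Finset.mem_insert_of_mem hx'S
    have hZc : Z.card ≤ S.card + 1 :=
      (Finset.card_le_card hZsub).trans (Finset.card_insert_le _ _)
    have hec : ({e, e} : Finset (Finset V)).card = 1 := by simp
    refine hmodest Z (by omega) ?_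
    unfold HSuperDense
    omega
  · have hefc : ({e, f} : Finset (Finset V)).card = 2 := Finset.card_pair hef
    have hZsub : Z ⊆ (insert b S) ∪ (e \ {x, b}) ∪ (f \ {x', b}) := by
      intro a ha
      rw [hZdef] at ha
      simp only [Finset.mem_union, Finset.mem_sdiff, Finset.mem_insert,
        Finset.mem_singleton] at ha ⊢
      rcases ha with ha | ha | ha
      · tauto
      · by_cases h1 : a = x
        · subst h1; tauto
        · by_cases h2 : a = b
          · subst h2; tauto
          · tauto
      · by_cases h1 : a = x'
        · subst h1; tauto
        · by_cases h2 : a = b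
          · subst h2; tauto
          · tauto
    have he1 : (e \ {x, b}).card = 1 := by
      rw [Finset.card_sdiff_of_subset (by
        intro a ha
        simp only [Finset.mem_insert, Finset.mem_singleton] at ha
        rcases ha with rfl | rfl
        · exact hxe
        · exact hbe)]
      rw [hT e heT, Finset.card_pair (Ne.symm hbx)]
    have hf1 : (f \ {x', b}).card = 1 := by
      rw [Finset.card_sdiff_of_subset (by
        intro a ha
        simp only [Finset.mem_insert, Finset.mem_singleton] at ha
        rcases ha with rfl | rfl
        · exact hx'f
        · exact hbf)]
      rw [hT f hfT, Finset.card_pair (Ne.symm hbx')]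
    have hZc : Z.card ≤ S.card + 3 := by
      have h1 := Finset.card_le_card hZsub
      have h2 := Finset.card_union_le ((insert b S) ∪ (e \ {x, b})) (f \ {x', b})
      have h3 := Finset.card_union_le (insert b S) (e \ {x, b})
      have h4 := Finset.card_insert_le b S
      omega
    refine hmodest Z (by omega) ?_
    unfold HSuperDense
    omega
end

section
/- Let H be a hypergraph of cardinality n and n' < n such that: (i) H is (2l+2)-modest; (ii) the number of red vertices is < n'; (iii) every vertex set of cardinality ≥ n' includes a hyperedge; (iv) for every nonempty vertex set X of cardinality < n' there is a vertex x ∈ X and distinct hyperedges h_1, h_2 with h_1 ∩ X = h_2 ∩ X = {x}. Then the green sub-hypergraph of H is an odd, l-meager hypergraph of cardinality > n − n'. -/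
open scoped Classical

variable {V : Type*} [DecidableEq V] [Fintype V]

/-- Weight is monotone. -/
lemma hWeight_mono (T : Finset (Finset V)) {X Y : Finset V} (h : X ⊆ Y) :
    hWeight T X ≤ hWeight T Y := by
  apply Finset.card_le_card
  intro e he
  simp only [Finset.mem_filter] at he ⊢
  exact ⟨he.1, he.2.trans h⟩

/-- Every small nonempty dense set contains a red block. -/
lemma exists_redBlock (T : Finset (Finset V)) (l : ℕ) :
    ∀ X : Finset V, X.Nonempty → X.card ≤ 2 * l → HDense T X →
      ∃ Y, Y ⊆ X ∧ RedBlock T l Y := by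
  intro X
  induction X using Finset.strongInduction with
  | _ X ih =>
    intro hne hcard hdense
    by_cases hmin : ∀ Y : Finset V, Y ⊂ X → Y.Nonempty → ¬ HDense T Y
    · exact ⟨X, subset_rfl, hne, hcard, hdense, hmin⟩
    · push_neg at hmin
      obtain ⟨Y, hYX, hYne, hYd⟩ := hmin
      obtain ⟨Z, hZY, hZ⟩ :=
        ih Y hYX hYne (le_trans (Finset.card_le_card hYX.subset) hcard) hYd
      exact ⟨Z, hZY.trans hYX.subset, hZ⟩

/-- Key counting lemma: two distinct hyperedges through a common green vertex
cannot both meet red blocks. -/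
lemma red_pair_contradiction (T : Finset (Finset V)) (hT : ∀ h ∈ T, h.card = 3)
    (l : ℕ) (hmodest : HModest T (2 * l + 2))
    {B₁ B₂ h₁ h₂ : Finset V} {x r₁ r₂ : V}
    (hB₁ : RedBlock T l B₁) (hB₂ : RedBlock T l B₂)
    (hh₁ : h₁ ∈ T) (hh₂ : h₂ ∈ T) (hne : h₁ ≠ h₂)
    (hx₁ : x ∈ h₁) (hx₂ : x ∈ h₂) (hxg : ¬ RedVertex T l x)
    (hr₁ : r₁ ∈ h₁) (hr₁B : r₁ ∈ B₁) (hr₂ : r₂ ∈ h₂) (hr₂B : r₂ ∈ B₂) :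
    False := by
  classical
  have hxB₁ : x ∉ B₁ := fun hx => hxg ⟨B₁, hB₁, hx⟩
  have hxB₂ : x ∉ B₂ := fun hx => hxg ⟨B₂, hB₂, hx⟩
  have hxr₁ : x ≠ r₁ := fun h => hxB₁ (h ▸ hr₁B)
  have hxr₂ : x ≠ r₂ := fun h => hxB₂ (h ▸ hr₂B)
  set Y : Finset V := (B₁ ∪ B₂) ∪ (h₁ ∪ h₂) with hY
  -- the edges h₁, h₂ are not inside B₁ ∪ B₂
  have hh₁nB : ¬ h₁ ⊆ B₁ ∪ B₂ := by
    intro hsub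
    rcases Finset.mem_union.1 (hsub hx₁) with h | h
    exacts [hxB₁ h, hxB₂ h]
  have hh₂nB : ¬ h₂ ⊆ B₁ ∪ B₂ := by
    intro hsub
    rcases Finset.mem_union.1 (hsub hx₂) with h | h
    exacts [hxB₁ h, hxB₂ h]
  -- weight lower bound
  set A : Finset (Finset V) := T.filter (· ⊆ B₁ ∪ B₂) with hA
  have hh₁A : h₁ ∉ A := by simp [hA, hh₁nB]
  have hh₂A : h₂ ∉ A := by simp [hA, hh₂nB]
  have hwYA : A.card + 2 ≤ hWeight T Y := by
    have hsub : insert h₁ (insert h₂ A) ⊆ T.filter (· ⊆ Y) := by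
      intro e he
      simp only [Finset.mem_insert] at he
      simp only [Finset.mem_filter]
      rcases he with rfl | rfl | he
      · exact ⟨hh₁, fun v hv => Finset.mem_union.2 (Or.inr (Finset.mem_union.2 (Or.inl hv)))⟩
      · exact ⟨hh₂, fun v hv => Finset.mem_union.2 (Or.inr (Finset.mem_union.2 (Or.inr hv)))⟩
      · simp only [hA, Finset.mem_filter] at he
        exact ⟨he.1, fun v hv => Finset.mem_union.2 (Or.inl (he.2 hv))⟩
    have hcard : (insert h₁ (insert h₂ A)).card = A.card + 2 := by
      rw [Finset.card_insert_of_notMem (by simp [hne, hh₁A]),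
        Finset.card_insert_of_notMem hh₂A]
    calc A.card + 2 = (insert h₁ (insert h₂ A)).card := hcard.symm
      _ ≤ _ := Finset.card_le_card hsub
  have hwA : hWeight T B₁ + hWeight T B₂ ≤ A.card + hWeight T (B₁ ∩ B₂) := by
    have hU : T.filter (· ⊆ B₁) ∪ T.filter (· ⊆ B₂) ⊆ A := by
      intro e he
      rcases Finset.mem_union.1 he with he | he <;>
        simp only [Finset.mem_filter] at he <;>
        simp only [hA, Finset.mem_filter] <;>
        exact ⟨he.1, he.2.trans (by simp [Finset.subset_union_left, Finset.subset_union_right])⟩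
    have hI : T.filter (· ⊆ B₁) ∩ T.filter (· ⊆ B₂) = T.filter (· ⊆ B₁ ∩ B₂) := by
      ext e
      simp only [Finset.mem_inter, Finset.mem_filter, Finset.subset_inter_iff]
      tauto
    have := Finset.card_union_add_card_inter (T.filter (· ⊆ B₁)) (T.filter (· ⊆ B₂))
    rw [hI] at this
    have hUc : (T.filter (· ⊆ B₁) ∪ T.filter (· ⊆ B₂)).card ≤ A.card :=
      Finset.card_le_card hU
    unfold hWeight
    omega
  -- cardinality upper bound
  have hDsub : (h₁ ∪ h₂) \ (B₁ ∪ B₂) ⊆ (h₁ \ {r₁}) ∪ (h₂ \ {r₂}) := by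
    intro v hv
    simp only [Finset.mem_sdiff, Finset.mem_union, Finset.mem_singleton] at hv ⊢
    rcases hv.1 with h | h
    · exact Or.inl ⟨h, fun hr => hv.2 (Or.inl (hr ▸ hr₁B))⟩
    · exact Or.inr ⟨h, fun hr => hv.2 (Or.inr (hr ▸ hr₂B))⟩
  have hD'card : ((h₁ \ {r₁}) ∪ (h₂ \ {r₂})).card ≤ 3 := by
    have h1c : (h₁ \ {r₁}).card = 2 := by
      rw [Finset.card_sdiff_of_subset (Finset.singleton_subset_iff.2 hr₁)]
      simp [hT h₁ hh₁]
    have h2c : (h₂ \ {r₂}).card = 2 := by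
      rw [Finset.card_sdiff_of_subset (Finset.singleton_subset_iff.2 hr₂)]
      simp [hT h₂ hh₂]
    have hxI : x ∈ (h₁ \ {r₁}) ∩ (h₂ \ {r₂}) := by
      simp [hx₁, hx₂, hxr₁, hxr₂]
    have hIc : 1 ≤ ((h₁ \ {r₁}) ∩ (h₂ \ {r₂})).card :=
      Finset.card_pos.2 ⟨x, hxI⟩
    have := Finset.card_union_add_card_inter (h₁ \ {r₁}) (h₂ \ {r₂})
    omega
  have hYc : Y.card ≤ (B₁ ∪ B₂).card + 3 := by
    have h1 : Y.card ≤ (B₁ ∪ B₂).card + ((h₁ ∪ h₂) \ (B₁ ∪ B₂)).card := by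
      have := Finset.card_sdiff_add_card ((h₁ ∪ h₂)) (B₁ ∪ B₂)
      have hYeq : Y = (h₁ ∪ h₂) ∪ (B₁ ∪ B₂) := by rw [hY, Finset.union_comm]
      rw [hYeq]
      omega
    have h2 := Finset.card_le_card hDsub
    omega
  have hB₁c : B₁.card ≤ 2 * hWeight T B₁ := hB₁.2.2.1
  have hB₂c : B₂.card ≤ 2 * hWeight T B₂ := hB₂.2.2.1
  have hB₁l : B₁.card ≤ 2 * l := hB₁.2.1
  have hB₂l : B₂.card ≤ 2 * l := hB₂.2.1
  have hUI := Finset.card_union_add_card_inter B₁ B₂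
  -- the intersection of the two blocks is small in weight
  have hint : B₁ = B₂ ∨ 2 * hWeight T (B₁ ∩ B₂) < (B₁ ∩ B₂).card ∨
      ((B₁ ∩ B₂).card = 0 ∧ hWeight T (B₁ ∩ B₂) = 0) := by
    by_cases hBB : B₁ = B₂
    · exact Or.inl hBB
    · rcases Finset.eq_empty_or_nonempty (B₁ ∩ B₂) with hemp | hne'
      · have hw0 : hWeight T (B₁ ∩ B₂) = 0 := by
          unfold hWeight
          rw [Finset.card_eq_zero, Finset.filter_eq_empty_iff]
          intro e he hsub
          have h3 := hT e he
          rw [hemp, Finset.subset_empty] at hsub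
          simp [hsub] at h3
        exact Or.inr (Or.inr ⟨by rw [hemp]; simp, hw0⟩)
      · -- B₁ ∩ B₂ is a proper nonempty subset of B₁, hence not dense
        have hss : B₁ ∩ B₂ ⊂ B₁ := by
          rw [Finset.ssubset_iff_subset_ne]
          refine ⟨Finset.inter_subset_left, ?_⟩
          intro heq
          have hsub12 : B₁ ⊆ B₂ := by
            intro v hv
            have : v ∈ B₁ ∩ B₂ := heq.symm ▸ hv
            exact (Finset.mem_inter.1 this).2
          have : B₁ ⊂ B₂ := Finset.ssubset_iff_subset_ne.2 ⟨hsub12, hBB⟩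
          exact hB₂.2.2.2 B₁ this hB₁.1 hB₁.2.2.1
        have hnd := hB₁.2.2.2 (B₁ ∩ B₂) hss hne'
        unfold HDense at hnd
        push_neg at hnd
        exact Or.inr (Or.inl hnd)
  -- conclude super-density of Y
  have hsd : HSuperDense T Y := by
    unfold HSuperDense
    rcases hint with hBB | hw
    · -- same block: Y.card ≤ B₁.card + 3 ≤ 2 w(B₁) + 3 < 2 (w(B₁) + 2)
      subst hBB
      simp only [Finset.union_self] at hYc
      have hA₁ : hWeight T B₁ ≤ A.card := by
        have : T.filter (· ⊆ B₁) ⊆ A := by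
          intro e he
          simp only [Finset.mem_filter] at he
          simp only [hA, Finset.mem_filter]
          exact ⟨he.1, he.2.trans Finset.subset_union_left⟩
        exact Finset.card_le_card this
      omega
    · omega
  have hYl : Y.card ≤ 2 * (2 * l + 2) := by
    rcases hint with hBB | _
    · subst hBB
      simp only [Finset.union_self] at hYc
      omega
    · omega
  exact hmodest Y hYl hsd

/-- Theorem 2.3.1: under the four listed conditions, the green sub-hypergraph of `H`
is an odd, `l`-meager hypergraph of cardinality `> n - n'`.  Here the vertex set of
the green sub-hypergraph is the set `G` of green (non-red) vertices and its
hyperedge set is `T.filter (· ⊆ G)`. -/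
theorem stmt9 (T : Finset (Finset V)) (hT : ∀ h ∈ T, h.card = 3) (l n' : ℕ)
    (hl : 2 ≤ l) (hn' : n' < Fintype.card V)
    (hmodest : HModest T (2 * l + 2))
    (hred : (Finset.univ.filter (fun v : V => RedVertex T l v)).card < n')
    (hbig : ∀ X : Finset V, n' ≤ X.card → ∃ h ∈ T, h ⊆ X)
    (hsmall : ∀ X : Finset V, X.Nonempty → X.card < n' →
      ∃ x ∈ X, ∃ h₁ ∈ T, ∃ h₂ ∈ T, h₁ ≠ h₂ ∧ h₁ ∩ X = {x} ∧ h₂ ∩ X = {x}) :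
    Fintype.card V - n' <
        (Finset.univ.filter (fun v : V => ¬ RedVertex T l v)).card ∧
    HMeager (T.filter
        (· ⊆ Finset.univ.filter (fun v : V => ¬ RedVertex T l v))) l ∧
    (∀ X : Finset V, X.Nonempty →
      X ⊆ Finset.univ.filter (fun v : V => ¬ RedVertex T l v) →
      ∃ h ∈ T.filter
          (· ⊆ Finset.univ.filter (fun v : V => ¬ RedVertex T l v)),
        Odd ((h ∩ X).card)) := by
  classical
  set G := Finset.univ.filter (fun v : V => ¬ RedVertex T l v) with hG
  have hmemG : ∀ v : V, v ∈ G ↔ ¬ RedVertex T l v := by intro v; simp [hG]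
  refine ⟨?_, ?_, ?_⟩
  · -- cardinality
    have hsplit : (Finset.univ.filter (fun v : V => RedVertex T l v)).card + G.card
        = Fintype.card V := by
      rw [hG, Finset.card_filter_add_card_filter_not, Finset.card_univ]
    omega
  · -- meagerness
    intro X hXne hXcard hdense
    have hw : hWeight (T.filter (· ⊆ G)) X ≤ hWeight T (X ∩ G) := by
      apply Finset.card_le_card
      intro e he
      simp only [Finset.mem_filter] at he ⊢
      exact ⟨he.1.1, Finset.subset_inter he.2 he.1.2⟩
    have hdense' : X.card ≤ 2 * hWeight T (X ∩ G) := le_trans hdense (by omega)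
    have hwpos : 0 < hWeight T (X ∩ G) := by
      rcases Nat.eq_zero_or_pos (hWeight T (X ∩ G)) with h0 | h
      · exfalso
        rw [h0] at hdense'
        simp only [Nat.mul_zero, Nat.le_zero, Finset.card_eq_zero] at hdense'
        exact hXne.ne_empty hdense'
      · exact h
    have hXGne : (X ∩ G).Nonempty := by
      obtain ⟨e, he⟩ := Finset.card_pos.1 hwpos
      simp only [Finset.mem_filter] at he
      have h3 := hT e he.1
      have : e.Nonempty := Finset.card_pos.1 (by omega)
      exact ⟨this.choose, he.2 this.choose_spec⟩
    have hXGd : HDense T (X ∩ G) := by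
      unfold HDense
      calc (X ∩ G).card ≤ X.card := Finset.card_le_card Finset.inter_subset_left
        _ ≤ 2 * hWeight T (X ∩ G) := hdense'
    obtain ⟨Y, hYsub, hYblock⟩ := exists_redBlock T l (X ∩ G)
      hXGne (le_trans (Finset.card_le_card Finset.inter_subset_left) hXcard) hXGd
    obtain ⟨y, hy⟩ := hYblock.1
    have hyred : RedVertex T l y := ⟨Y, hYblock, hy⟩
    exact (hmemG y).1 ((Finset.mem_inter.1 (hYsub hy)).2) hyred
  · -- oddness
    intro X hXne hXG
    by_cases hbigX : n' ≤ X.card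
    · obtain ⟨h, hhT, hhX⟩ := hbig X hbigX
      refine ⟨h, ?_, ?_⟩
      · simp only [Finset.mem_filter]
        exact ⟨hhT, hhX.trans hXG⟩
      · rw [Finset.inter_eq_left.2 hhX, hT h hhT]
        exact ⟨1, by omega⟩
    · push_neg at hbigX
      obtain ⟨x, hxX, h₁, hh₁, h₂, hh₂, hne12, hi₁, hi₂⟩ := hsmall X hXne hbigX
      have hx₁ : x ∈ h₁ := by
        have : x ∈ h₁ ∩ X := by rw [hi₁]; exact Finset.mem_singleton_self x
        exact (Finset.mem_inter.1 this).1
      have hx₂ : x ∈ h₂ := by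
        have : x ∈ h₂ ∩ X := by rw [hi₂]; exact Finset.mem_singleton_self x
        exact (Finset.mem_inter.1 this).1
      have hxg : ¬ RedVertex T l x := (hmemG x).1 (hXG hxX)
      by_cases hg1 : h₁ ⊆ G
      · refine ⟨h₁, by simp only [Finset.mem_filter]; exact ⟨hh₁, hg1⟩, ?_⟩
        rw [hi₁, Finset.card_singleton]
        exact odd_one
      · by_cases hg2 : h₂ ⊆ G
        · refine ⟨h₂, by simp only [Finset.mem_filter]; exact ⟨hh₂, hg2⟩, ?_⟩
          rw [hi₂, Finset.card_singleton]
          exact odd_one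
        · exfalso
          have hr1 : ∃ r ∈ h₁, RedVertex T l r := by
            by_contra hc
            push_neg at hc
            exact hg1 (fun v hv => (hmemG v).2 (hc v hv))
          have hr2 : ∃ r ∈ h₂, RedVertex T l r := by
            by_contra hc
            push_neg at hc
            exact hg2 (fun v hv => (hmemG v).2 (hc v hv))
          obtain ⟨r₁, hr₁, B₁, hB₁, hr₁B⟩ := hr1
          obtain ⟨r₂, hr₂, B₂, hB₂, hr₂B⟩ := hr2
          exact red_pair_contradiction T hT l hmodest hB₁ hB₂ hh₁ hh₂ hne12
            hx₁ hx₂ hxg hr₁ hr₁B hr₂ hr₂B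
end

section
/- In a 2k-meager hypergraph, if Y is a vertex set of cardinality ≤ k and p is the cardinality of (closure of Y) minus Y, then p < ‖Y‖ and there is an ordering z_1,...,z_p of the elements of the closure of Y outside Y such that each z_j is attracted by Y ∪ {z_i : i < j}. -/
variable {V : Type*} [DecidableEq V] [Fintype V]

/-- `X` attracts `y` if there are distinct `x₁, x₂ ∈ X` with `{x₁, x₂, y}` a
hyperedge. -/
def Attracts (T : Finset (Finset V)) (X : Finset V) (y : V) : Prop :=
  ∃ x₁ ∈ X, ∃ x₂ ∈ X, x₁ ≠ x₂ ∧ ({x₁, x₂, y} : Finset V) ∈ T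

/-- `X` is closed if it contains every vertex it attracts. -/
def IsClosedSet (T : Finset (Finset V)) (X : Finset V) : Prop :=
  ∀ y : V, Attracts T X y → y ∈ X

/-- `C` is the closure of `X`: the least closed set containing `X`. -/
def IsClosureOf (T : Finset (Finset V)) (X C : Finset V) : Prop :=
  X ⊆ C ∧ IsClosedSet T C ∧ ∀ D : Finset V, X ⊆ D → IsClosedSet T D → C ⊆ D

set_option linter.unusedSectionVars false in
lemma attracts_mono {T : Finset (Finset V)} {X X' : Finset V} (h : X ⊆ X') {y : V}
    (ha : Attracts T X y) : Attracts T X' y := by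
  obtain ⟨a, ha1, b, hb1, hab, he⟩ := ha
  exact ⟨a, h ha1, b, h hb1, hab, he⟩

lemma exists_attracted {T : Finset (Finset V)} {Y C X : Finset V}
    (hC : IsClosureOf T Y C) (hYX : Y ⊆ X) (hXC : X ⊆ C) (hne : X ≠ C) :
    ∃ y ∈ C \ X, Attracts T X y := by
  by_cases hcl : IsClosedSet T X
  · exact absurd (Finset.Subset.antisymm hXC (hC.2.2 X hYX hcl)) hne
  · simp only [IsClosedSet, not_forall] at hcl
    obtain ⟨y, hy, hyX⟩ := hcl
    exact ⟨y, Finset.mem_sdiff.mpr ⟨hC.2.1 y (attracts_mono hXC hy), hyX⟩, hy⟩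

lemma weight_step {T : Finset (Finset V)} {X : Finset V} {y : V} (hy : y ∉ X)
    (ha : Attracts T X y) : hWeight T X + 1 ≤ hWeight T (insert y X) := by
  obtain ⟨a, ha1, b, hb1, hab, he⟩ := ha
  have hsub : T.filter (· ⊆ X) ⊆ T.filter (· ⊆ insert y X) := by
    intro e he'
    simp only [Finset.mem_filter] at he' ⊢
    exact ⟨he'.1, he'.2.trans (Finset.subset_insert y X)⟩
  have hss : T.filter (· ⊆ X) ⊂ T.filter (· ⊆ insert y X) := by
    rw [Finset.ssubset_iff_of_subset hsub]
    refine ⟨{a, b, y}, ?_, ?_⟩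
    · simp only [Finset.mem_filter]
      refine ⟨he, ?_⟩
      intro x hx
      simp only [Finset.mem_insert] at hx ⊢
      rcases hx with h | h | h
      · exact Or.inr (h ▸ ha1)
      · exact Or.inr (h ▸ hb1)
      · exact Or.inl (Finset.mem_singleton.mp h)
    · simp only [Finset.mem_filter, not_and]
      intro _ hsub
      exact hy (hsub (by simp))
  exact Finset.card_lt_card hss

lemma grow {T : Finset (Finset V)} {Y C : Finset V} (hC : IsClosureOf T Y C) :
    ∀ m X, Y ⊆ X → X ⊆ C → m ≤ (C \ X).card →
      ∃ X' : Finset V, X ⊆ X' ∧ X' ⊆ C ∧ X'.card = X.card + m ∧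
        hWeight T X + m ≤ hWeight T X' := by
  intro m
  induction m with
  | zero => intro X _ h2 _; exact ⟨X, subset_rfl, h2, by simp, by simp⟩
  | succ n ih =>
    intro X h1 h2 hm
    have hne : X ≠ C := by
      intro h; subst h; simp at hm
    obtain ⟨y, hy, ha⟩ := exists_attracted hC h1 h2 hne
    obtain ⟨hyC, hyX⟩ := Finset.mem_sdiff.mp hy
    have hcard : (C \ insert y X).card + 1 = (C \ X).card := by
      rw [Finset.sdiff_insert]
      exact Finset.card_erase_add_one (Finset.mem_sdiff.mpr ⟨hyC, hyX⟩)
    obtain ⟨X', hs, hs2, hcard', hw⟩ := ih (insert y X)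
      (h1.trans (Finset.subset_insert y X)) (Finset.insert_subset hyC h2) (by omega)
    refine ⟨X', (Finset.subset_insert y X).trans hs, hs2, ?_, ?_⟩
    · rw [hcard', Finset.card_insert_of_notMem hyX]; ring
    · have := weight_step hyX ha; omega

lemma enumerate {T : Finset (Finset V)} {Y C : Finset V} (hC : IsClosureOf T Y C) :
    ∀ n X, Y ⊆ X → X ⊆ C → (C \ X).card = n →
      ∃ z : Fin n → V, Function.Injective z ∧ (∀ j, z j ∈ C \ X) ∧
        ∀ j : Fin n,
          Attracts T (X ∪ (Finset.univ.filter (fun i : Fin n => i < j)).image z) (z j) := by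
  intro n
  induction n with
  | zero =>
    intro X _ _ _
    exact ⟨Fin.elim0, fun a => a.elim0, fun j => j.elim0, fun j => j.elim0⟩
  | succ n ih =>
    intro X h1 h2 hcard
    have hne : X ≠ C := by
      intro h; subst h; simp at hcard
    obtain ⟨y, hy, ha⟩ := exists_attracted hC h1 h2 hne
    obtain ⟨hyC, hyX⟩ := Finset.mem_sdiff.mp hy
    have hcard' : (C \ insert y X).card = n := by
      have := Finset.card_erase_add_one (Finset.mem_sdiff.mpr ⟨hyC, hyX⟩)
      rw [Finset.sdiff_insert]; omega
    obtain ⟨z', hinj, hmem, hatt⟩ := ih (insert y X)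
      (h1.trans (Finset.subset_insert y X)) (Finset.insert_subset hyC h2) hcard'
    refine ⟨Fin.cons y z', ?_, ?_, ?_⟩
    · refine Fin.cons_injective_iff.mpr ⟨?_, hinj⟩
      rintro ⟨i, hi⟩
      exact (Finset.mem_sdiff.mp (hmem i)).2 (by rw [hi]; exact Finset.mem_insert_self y X)
    · intro j
      refine Fin.cases ?_ ?_ j
      · exact hy
      · intro i
        have := Finset.mem_sdiff.mp (hmem i)
        exact Finset.mem_sdiff.mpr ⟨this.1, fun h => this.2 (Finset.mem_insert_of_mem h)⟩
    · intro j
      refine Fin.cases ?_ ?_ j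
      · simp only [Fin.cons_zero]
        exact attracts_mono Finset.subset_union_left ha
      · intro i
        simp only [Fin.cons_succ]
        refine attracts_mono ?_ (hatt i)
        intro a haa
        rcases Finset.mem_union.mp haa with h | h
        · rcases Finset.mem_insert.mp h with rfl | h
          · refine Finset.mem_union_right _ ?_
            refine Finset.mem_image.mpr ⟨0, ?_, rfl⟩
            simp [Fin.succ_pos]
          · exact Finset.mem_union_left _ h
        · obtain ⟨b, hb, rfl⟩ := Finset.mem_image.mp h
          refine Finset.mem_union_right _ ?_
          refine Finset.mem_image.mpr ⟨b.succ, ?_, rfl⟩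
          simp only [Finset.mem_filter, Finset.mem_univ, true_and] at hb ⊢
          exact Fin.succ_lt_succ_iff.mpr hb

/-- In a `2k`-meager hypergraph, if `Y` is a (nonempty) vertex set of cardinality
`≤ k` with closure `C` and `p = ‖C \ Y‖`, then `p < ‖Y‖` and there is an ordering
`z₁, …, z_p` of `C \ Y` such that each `z_j` is attracted by
`Y ∪ {z_i : i < j}`. -/
theorem stmt11 (T : Finset (Finset V)) (hT : ∀ h ∈ T, h.card = 3) (k : ℕ)
    (hmeager : HMeager T (2 * k)) (Y C : Finset V) (hYne : Y.Nonempty)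
    (hYk : Y.card ≤ k) (hC : IsClosureOf T Y C) (p : ℕ) (hp : p = (C \ Y).card) :
    p < Y.card ∧
    ∃ z : Fin p → V, Function.Injective z ∧ (∀ j : Fin p, z j ∈ C \ Y) ∧
      ∀ j : Fin p,
        Attracts T (Y ∪ (Finset.univ.filter (fun i : Fin p => i < j)).image z)
          (z j) := by
  have hplt : p < Y.card := by
    by_contra hlt
    push_neg at hlt
    obtain ⟨X', hs, _, hcardX, hw⟩ := grow hC Y.card Y subset_rfl hC.1 (by omega)
    refine hmeager X' (hYne.mono hs) ?_ ?_
    · omega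
    · unfold HDense; omega
  exact ⟨hplt, enumerate hC p Y subset_rfl hC.1 hp.symm⟩
end

section
/- Suppose X is a vertex set of cardinality < k in a 2k-meager hypergraph, z_0 is a vertex not in the closure of X, Y = (closure of X) ∪ {z_0}, Z = closure of Y, and p = ‖Z − Y‖. Then p < k and there is an ordering z_1,...,z_p of Z − Y such that for every j ≥ 1, z_j is attracted by Y ∪ {z_i : 1 ≤ i < j} and there is a UNIQUE hyperedge witnessing this attraction. -/
set_option linter.unusedSectionVars false
set_option linter.unusedVariables false
set_option maxHeartbeats 1000000


variable {V : Type*} [DecidableEq V] [Fintype V]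

/-- growth iteration -/
def grow_s12 (f : V → Finset V) (S₀ : Finset V) : ℕ → Finset V
  | 0 => S₀
  | n+1 => grow_s12 f S₀ n ∪ (grow_s12 f S₀ n).biUnion f

lemma grow_stable (f : V → Finset V) (S₀ : Finset V) :
    ∃ n, grow_s12 f S₀ (n+1) = grow_s12 f S₀ n := by
  by_contra hc
  push_neg at hc
  have hmono : ∀ n, grow_s12 f S₀ n ⊂ grow_s12 f S₀ (n+1) := fun n =>
    HasSubset.Subset.ssubset_of_ne Finset.subset_union_left (hc n).symm
  have hcard : ∀ n, n ≤ (grow_s12 f S₀ n).card := by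
    intro n
    induction n with
    | zero => exact Nat.zero_le _
    | succ n ih => exact Nat.lt_of_le_of_lt ih (Finset.card_lt_card (hmono n))
  have h1 := hcard (Fintype.card V + 1)
  have h2 : (grow_s12 f S₀ (Fintype.card V + 1)).card ≤ Fintype.card V :=
    Finset.card_le_univ _
  omega

lemma grow_base (f : V → Finset V) (S₀ : Finset V) (n : ℕ) : S₀ ⊆ grow_s12 f S₀ n := by
  induction n with
  | zero => exact Finset.Subset.rfl
  | succ n ih => exact ih.trans Finset.subset_union_left

lemma grow_induct (f : V → Finset V) (S₀ : Finset V) (M : Finset V)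
    (h0 : S₀ ⊆ M) (hcl : ∀ v ∈ M, f v ⊆ M) (n : ℕ) : grow_s12 f S₀ n ⊆ M := by
  induction n with
  | zero => exact h0
  | succ n ih =>
    refine Finset.union_subset ih (Finset.biUnion_subset.2 ?_)
    intro v hv
    exact hcl v (ih hv)

lemma grow_mem_rec (f : V → Finset V) (S₀ : Finset V) (n : ℕ) :
    ∀ u ∈ grow_s12 f S₀ n, u ∈ S₀ ∨ ∃ v ∈ grow_s12 f S₀ n, u ∈ f v ∧ v ≠ u := by
  induction n with
  | zero => exact fun u hu => Or.inl hu
  | succ n ih =>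
    intro u hu
    rcases Finset.mem_union.1 hu with hu | hu
    · rcases ih u hu with h | ⟨v, hv, h1, h2⟩
      · exact Or.inl h
      · exact Or.inr ⟨v, Finset.mem_union_left _ hv, h1, h2⟩
    · rcases Finset.mem_biUnion.1 hu with ⟨v, hv, huf⟩
      by_cases hvu : v = u
      · rcases ih u (hvu ▸ hv) with h | ⟨v', hv', h1, h2⟩
        · exact Or.inl h
        · exact Or.inr ⟨v', Finset.mem_union_left _ hv', h1, h2⟩
      · exact Or.inr ⟨v, Finset.mem_union_left _ hv, huf, hvu⟩

lemma prev_cases_succ {n : ℕ} (y : V) (z' : Fin n → V) (i : Fin n) :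
    ((Finset.univ.filter (fun i' : Fin (n+1) => i' < i.succ)).image (Fin.cases y z'))
      = insert y ((Finset.univ.filter (fun i' : Fin n => i' < i)).image z') := by
  ext u
  simp only [Finset.mem_image, Finset.mem_filter, Finset.mem_univ, true_and, Finset.mem_insert]
  constructor
  · rintro ⟨i', hlt, rfl⟩
    induction i' using Fin.cases with
    | zero => exact Or.inl rfl
    | succ i'' =>
      exact Or.inr ⟨i'', Fin.succ_lt_succ_iff.1 hlt, rfl⟩
  · rintro (rfl | ⟨i'', hlt, rfl⟩)
    · exact ⟨0, Fin.succ_pos i, rfl⟩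
    · exact ⟨i''.succ, Fin.succ_lt_succ_iff.2 hlt, rfl⟩

lemma chain_exists (T : Finset (Finset V)) (n : ℕ) :
    ∀ (B D : Finset V), IsClosureOf T B D → (D \ B).card = n →
    ∃ (z : Fin n → V) (E : Fin n → Finset V),
      Function.Injective z ∧
      (∀ j, z j ∈ D) ∧
      (∀ j, z j ∉ B ∪ (Finset.univ.filter (fun i => i < j)).image z) ∧
      (∀ j, E j ∈ T) ∧
      (∀ j, ∃ x₁ ∈ B ∪ (Finset.univ.filter (fun i => i < j)).image z,
             ∃ x₂ ∈ B ∪ (Finset.univ.filter (fun i => i < j)).image z,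
             x₁ ≠ x₂ ∧ E j = {x₁, x₂, z j}) := by
  induction n with
  | zero =>
    intro B D _ _
    exact ⟨Fin.elim0, Fin.elim0, fun a => a.elim0, fun j => j.elim0, fun j => j.elim0,
      fun j => j.elim0, fun j => j.elim0⟩
  | succ n ih =>
    intro B D hcl hcard
    obtain ⟨hBD, hDcl, hmin⟩ := hcl
    have hne : ¬ IsClosedSet T B := by
      intro hB
      have hsub : D ⊆ B := hmin B Finset.Subset.rfl hB
      have : D \ B = ∅ := Finset.sdiff_eq_empty_iff_subset.2 hsub
      rw [this] at hcard
      simp at hcard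
    rw [IsClosedSet] at hne
    push_neg at hne
    obtain ⟨y, hyA, hyB⟩ := hne
    have hyD : y ∈ D := by
      obtain ⟨x₁, h₁, x₂, h₂, h12, hT12⟩ := hyA
      exact hDcl y ⟨x₁, hBD h₁, x₂, hBD h₂, h12, hT12⟩
    have hclo' : IsClosureOf T (insert y B) D :=
      ⟨Finset.insert_subset hyD hBD, hDcl,
        fun D' hsub hcl' => hmin D' ((Finset.subset_insert y B).trans hsub) hcl'⟩
    have hcard' : (D \ insert y B).card = n := by
      rw [Finset.sdiff_insert, Finset.card_erase_of_mem (Finset.mem_sdiff.2 ⟨hyD, hyB⟩), hcard]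
      rfl
    obtain ⟨z', E', hinj, hmem, hnotin, hET, hwit⟩ := ih (insert y B) D hclo' hcard'
    obtain ⟨x₁, h₁, x₂, h₂, h12, hT12⟩ := hyA
    have hz'y : ∀ i, z' i ≠ y := fun i h =>
      (hnotin i) (Finset.mem_union_left _ (h ▸ Finset.mem_insert_self y B))
    have hzero : (Finset.univ.filter (fun i' : Fin (n+1) => i' < 0)) = ∅ := by
      apply Finset.filter_false_of_mem
      intro i _
      exact Fin.not_lt_zero i
    have hset : ∀ j' : Fin n, B ∪ insert y ((Finset.univ.filter (fun i => i < j')).image z')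
        = insert y B ∪ (Finset.univ.filter (fun i => i < j')).image z' := by
      intro j'
      rw [Finset.union_insert, Finset.insert_union]
    refine ⟨Fin.cases y z', Fin.cases {x₁, x₂, y} E', ?_, ?_, ?_, ?_, ?_⟩
    · intro a b hab
      rcases Fin.eq_zero_or_eq_succ a with rfl | ⟨a', rfl⟩ <;>
        rcases Fin.eq_zero_or_eq_succ b with rfl | ⟨b', rfl⟩ <;>
          simp only [Fin.cases_zero, Fin.cases_succ] at hab ⊢
      · exact absurd hab.symm (hz'y b')
      · exact absurd hab (hz'y a')
      · exact congrArg Fin.succ (hinj hab)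
    · intro j
      rcases Fin.eq_zero_or_eq_succ j with rfl | ⟨j', rfl⟩
      · exact hyD
      · exact hmem j'
    · intro j
      rcases Fin.eq_zero_or_eq_succ j with rfl | ⟨j', rfl⟩
      · rw [hzero, Finset.image_empty, Finset.union_empty]
        exact hyB
      · rw [prev_cases_succ, hset j']
        simp only [Fin.cases_succ]
        exact hnotin j'
    · intro j
      rcases Fin.eq_zero_or_eq_succ j with rfl | ⟨j', rfl⟩
      · exact hT12
      · exact hET j'
    · intro j
      rcases Fin.eq_zero_or_eq_succ j with rfl | ⟨j', rfl⟩
      · rw [hzero, Finset.image_empty, Finset.union_empty]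
        simp only [Fin.cases_zero]
        exact ⟨x₁, h₁, x₂, h₂, h12, rfl⟩
      · rw [prev_cases_succ, hset j']
        simp only [Fin.cases_succ]
        exact hwit j'


lemma weight_lower (T : Finset (Finset V)) (W : Finset V) (E : Finset (Finset V))
    (hE : ∀ e ∈ E, e ∈ T ∧ e ⊆ W) : E.card ≤ hWeight T W :=
  Finset.card_le_card (fun e he => Finset.mem_filter.2 ⟨(hE e he).1, (hE e he).2⟩)

lemma card_filter_val_lt (n m : ℕ) (hm : m ≤ n) :
    (Finset.filter (fun i : Fin n => (i : ℕ) < m) Finset.univ).card = m := by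
  have he : Finset.filter (fun i : Fin n => (i : ℕ) < m) Finset.univ
      = Finset.image (Fin.castLE hm) (Finset.univ : Finset (Fin m)) := by
    ext i
    simp only [Finset.mem_filter, Finset.mem_univ, true_and, Finset.mem_image]
    constructor
    · intro h
      exact ⟨⟨(i : ℕ), h⟩, Fin.ext rfl⟩
    · rintro ⟨i', rfl⟩
      exact i'.2
  rw [he, Finset.card_image_of_injective _ (Fin.castLE_injective hm), Finset.card_univ,
    Fintype.card_fin]

/-- Theorem 2.4.1: in a `2k`-meager hypergraph, let `X` have cardinality `< k`,
let `z₀` lie outside the closure of `X`, let `Y` be that closure together with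
`z₀`, let `C` be the closure of `Y`, and `p = ‖C \ Y‖`.  Then `p < k` and there is
an ordering `z₁, …, z_p` of `C \ Y` such that each `z_j` is attracted by
`Y ∪ {z_i : 1 ≤ i < j}` via a *unique* witnessing hyperedge. -/
theorem stmt12 (T : Finset (Finset V)) (hT : ∀ h ∈ T, h.card = 3) (k : ℕ)
    (hmeager : HMeager T (2 * k)) (X CX : Finset V) (hXk : X.card < k)
    (hCX : IsClosureOf T X CX) (z₀ : V) (hz₀ : z₀ ∉ CX)
    (Y : Finset V) (hY : Y = insert z₀ CX)
    (C : Finset V) (hC : IsClosureOf T Y C) (p : ℕ) (hp : p = (C \ Y).card) :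
    p < k ∧
    ∃ z : Fin p → V, Function.Injective z ∧ (∀ j : Fin p, z j ∈ C \ Y) ∧
      ∀ j : Fin p,
        ∃! h : Finset V, h ∈ T ∧
          ∃ x₁ ∈ Y ∪ (Finset.univ.filter (fun i : Fin p => i < j)).image z,
            ∃ x₂ ∈ Y ∪ (Finset.univ.filter (fun i : Fin p => i < j)).image z,
              x₁ ≠ x₂ ∧ h = ({x₁, x₂, z j} : Finset V) := by
  subst hp
  obtain ⟨hXCX, hCXcl, hCXmin⟩ := hCX
  obtain ⟨hYC, hCcl, hCmin⟩ := hC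
  obtain ⟨w, wE, hwInj, hwD, hwNot, hwT, hwWit⟩ :=
    chain_exists T (CX \ X).card X CX ⟨hXCX, hCXcl, hCXmin⟩ rfl
  obtain ⟨z, zE, hzInj, hzD, hzNot, hzT, hzWit⟩ :=
    chain_exists T (C \ Y).card Y C ⟨hYC, hCcl, hCmin⟩ rfl
  have hCXY : CX ⊆ Y := hY ▸ Finset.subset_insert z₀ CX
  have hXY : X ⊆ Y := hXCX.trans hCXY
  have hz₀Y : z₀ ∈ Y := hY ▸ Finset.mem_insert_self z₀ CX
  have hz₀C : z₀ ∈ C := hYC hz₀Y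
  have hk1 : 1 ≤ k := by omega
  -- memberships
  have hwMem : ∀ i, w i ∈ CX \ X := fun i => Finset.mem_sdiff.2
    ⟨hwD i, fun hx => hwNot i (Finset.mem_union_left _ hx)⟩
  have hzMem : ∀ i, z i ∈ C \ Y := fun i => Finset.mem_sdiff.2
    ⟨hzD i, fun hx => hzNot i (Finset.mem_union_left _ hx)⟩
  have hwImg : Finset.univ.image w = CX \ X := by
    apply Finset.eq_of_subset_of_card_le
    · intro v hv
      rcases Finset.mem_image.1 hv with ⟨i, _, rfl⟩
      exact hwMem i
    · rw [Finset.card_image_of_injective _ hwInj, Finset.card_univ, Fintype.card_fin]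
  have hzImg : Finset.univ.image z = C \ Y := by
    apply Finset.eq_of_subset_of_card_le
    · intro v hv
      rcases Finset.mem_image.1 hv with ⟨i, _, rfl⟩
      exact hzMem i
    · rw [Finset.card_image_of_injective _ hzInj, Finset.card_univ, Fintype.card_fin]
  have hwSurj : ∀ v ∈ CX \ X, ∃ i, w i = v := by
    intro v hv
    rcases Finset.mem_image.1 (hwImg ▸ hv) with ⟨i, _, h⟩
    exact ⟨i, h⟩
  have hzSurj : ∀ v ∈ C \ Y, ∃ i, z i = v := by
    intro v hv
    rcases Finset.mem_image.1 (hzImg ▸ hv) with ⟨i, _, h⟩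
    exact ⟨i, h⟩
  -- wE is contained in CX
  have hwEsub : ∀ i, wE i ⊆ CX := by
    intro i
    obtain ⟨x₁, hx₁, x₂, hx₂, _, hEeq⟩ := hwWit i
    have hXp : X ∪ (Finset.univ.filter (fun i' => i' < i)).image w ⊆ CX := by
      apply Finset.union_subset hXCX
      intro v hv
      rcases Finset.mem_image.1 hv with ⟨i', _, rfl⟩
      exact hwD i'
    rw [hEeq]
    refine Finset.insert_subset (hXp hx₁) (Finset.insert_subset (hXp hx₂) ?_)
    simpa using hwD i
  -- top lemmas
  have hwTopLe : ∀ i i', w i' ∈ wE i → i' ≤ i := by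
    intro i i' hmem
    obtain ⟨x₁, hx₁, x₂, hx₂, _, hEeq⟩ := hwWit i
    rw [hEeq] at hmem
    have hcase : ∀ x, x ∈ X ∪ (Finset.univ.filter (fun i'' => i'' < i)).image w →
        w i' = x → i' < i := by
      intro x hx hwx
      rcases Finset.mem_union.1 hx with hx | hx
      · exact absurd (hwx ▸ hx) (fun h => (Finset.mem_sdiff.1 (hwMem i')).2 h)
      · rcases Finset.mem_image.1 hx with ⟨i'', hi'', rfl⟩
        rw [hwInj hwx]
        exact (Finset.mem_filter.1 hi'').2
    rcases Finset.mem_insert.1 hmem with h | h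
    · exact (hcase x₁ hx₁ h).le
    rcases Finset.mem_insert.1 h with h | h
    · exact (hcase x₂ hx₂ h).le
    · exact (hwInj (Finset.mem_singleton.1 h)).le
  have hzTopLe : ∀ i i', z i' ∈ zE i → i' ≤ i := by
    intro i i' hmem
    obtain ⟨x₁, hx₁, x₂, hx₂, _, hEeq⟩ := hzWit i
    rw [hEeq] at hmem
    have hcase : ∀ x, x ∈ Y ∪ (Finset.univ.filter (fun i'' => i'' < i)).image z →
        z i' = x → i' < i := by
      intro x hx hwx
      rcases Finset.mem_union.1 hx with hx | hx
      · exact absurd (hwx ▸ hx) (fun h => (Finset.mem_sdiff.1 (hzMem i')).2 h)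
      · rcases Finset.mem_image.1 hx with ⟨i'', hi'', rfl⟩
        rw [hzInj hwx]
        exact (Finset.mem_filter.1 hi'').2
    rcases Finset.mem_insert.1 hmem with h | h
    · exact (hcase x₁ hx₁ h).le
    rcases Finset.mem_insert.1 h with h | h
    · exact (hcase x₂ hx₂ h).le
    · exact (hzInj (Finset.mem_singleton.1 h)).le
  have hwEmem : ∀ i, w i ∈ wE i := by
    intro i
    obtain ⟨x₁, _, x₂, _, _, hEeq⟩ := hwWit i
    rw [hEeq]
    exact Finset.mem_insert.2 (Or.inr (Finset.mem_insert.2 (Or.inr (Finset.mem_singleton_self _))))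
  have hzEmem : ∀ i, z i ∈ zE i := by
    intro i
    obtain ⟨x₁, _, x₂, _, _, hEeq⟩ := hzWit i
    rw [hEeq]
    exact Finset.mem_insert.2 (Or.inr (Finset.mem_insert.2 (Or.inr (Finset.mem_singleton_self _))))
  have hwEinj : Function.Injective wE := by
    intro i i' h
    exact le_antisymm (hwTopLe i' i (h ▸ hwEmem i)) (hwTopLe i i' (h.symm ▸ hwEmem i'))
  have hzEinj : Function.Injective zE := by
    intro i i' h
    exact le_antisymm (hzTopLe i' i (h ▸ hzEmem i)) (hzTopLe i i' (h.symm ▸ hzEmem i'))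
  have hCXcard : CX.card = X.card + (CX \ X).card := by
    have := Finset.card_le_card hXCX
    rw [Finset.card_sdiff_of_subset hXCX]
    omega
  have hYcard : Y.card ≤ CX.card + 1 := by
    rw [hY]
    exact Finset.card_insert_le _ _
  have hqX : (CX \ X).card ≤ X.card := by
    by_contra hq'
    push_neg at hq'
    have hm : X.card + 1 ≤ (CX \ X).card := hq'
    set m := X.card + 1 with hmdef
    set Wm : Finset V := X ∪ (Finset.filter (fun i : Fin (CX \ X).card => (i : ℕ) < m)
      Finset.univ).image w with hWm
    have hwEWm : ∀ i : Fin (CX \ X).card, (i : ℕ) < m → wE i ⊆ Wm := by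
      intro i him
      obtain ⟨x₁, hx₁, x₂, hx₂, _, hEeq⟩ := hwWit i
      have hsub : X ∪ (Finset.univ.filter (fun i' => i' < i)).image w ⊆ Wm := by
        apply Finset.union_subset
        · exact Finset.subset_union_left
        · intro v hv
          rcases Finset.mem_image.1 hv with ⟨i', hi', rfl⟩
          have h1 : (i' : ℕ) < (i : ℕ) := (Finset.mem_filter.1 hi').2
          have h2 : (i' : ℕ) < m := by omega
          exact Finset.mem_union_right _ (Finset.mem_image.2
            ⟨i', Finset.mem_filter.2 ⟨Finset.mem_univ _, h2⟩, rfl⟩)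
      rw [hEeq]
      exact Finset.insert_subset (hsub hx₁) (Finset.insert_subset (hsub hx₂)
        (Finset.singleton_subset_iff.2 (Finset.mem_union_right _ (Finset.mem_image.2
          ⟨i, Finset.mem_filter.2 ⟨Finset.mem_univ _, him⟩, rfl⟩))))
    set Em : Finset (Finset V) := (Finset.filter (fun i : Fin (CX \ X).card => (i : ℕ) < m)
      Finset.univ).image wE with hEm
    have hcardEm : Em.card = m := by
      rw [hEm, Finset.card_image_of_injective _ hwEinj, card_filter_val_lt _ _ hm]
    have hwt : m ≤ hWeight T Wm := by
      rw [← hcardEm]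
      apply weight_lower
      intro e he
      rcases Finset.mem_image.1 he with ⟨i, hi, rfl⟩
      exact ⟨hwT i, hwEWm i (Finset.mem_filter.1 hi).2⟩
    have hWmcard : Wm.card ≤ 2 * m := by
      have h1 : Wm.card ≤ X.card + ((Finset.filter (fun i : Fin (CX \ X).card => (i : ℕ) < m)
          Finset.univ).image w).card := Finset.card_union_le _ _
      have h2 : ((Finset.filter (fun i : Fin (CX \ X).card => (i : ℕ) < m)
          Finset.univ).image w).card ≤ m := by
        refine le_trans (Finset.card_image_le) ?_
        rw [card_filter_val_lt _ _ hm]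
      omega
    have hWne : Wm.Nonempty := by
      refine ⟨w ⟨0, by omega⟩, Finset.mem_union_right _ (Finset.mem_image.2
        ⟨⟨0, by omega⟩, Finset.mem_filter.2 ⟨Finset.mem_univ _, by simp [hmdef]⟩, rfl⟩)⟩
    have hdense : HDense T Wm := le_trans hWmcard (Nat.mul_le_mul_left 2 hwt)
    exact hmeager Wm hWne (by omega) hdense
  have hpq : (C \ Y).card + (CX \ X).card ≤ X.card := by
    by_contra hp'
    push_neg at hp'
    set m := X.card + 1 - (CX \ X).card with hmdef
    have hm : m ≤ (C \ Y).card := by omega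
    have hqm : (CX \ X).card + m = X.card + 1 := by omega
    set Um : Finset V := Y ∪ (Finset.filter (fun i : Fin (C \ Y).card => (i : ℕ) < m)
      Finset.univ).image z with hUm
    have hzEUm : ∀ i : Fin (C \ Y).card, (i : ℕ) < m → zE i ⊆ Um := by
      intro i him
      obtain ⟨x₁, hx₁, x₂, hx₂, _, hEeq⟩ := hzWit i
      have hsub : Y ∪ (Finset.univ.filter (fun i' => i' < i)).image z ⊆ Um := by
        apply Finset.union_subset
        · exact Finset.subset_union_left
        · intro v hv
          rcases Finset.mem_image.1 hv with ⟨i', hi', rfl⟩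
          have h1 : (i' : ℕ) < (i : ℕ) := (Finset.mem_filter.1 hi').2
          have h2 : (i' : ℕ) < m := by omega
          exact Finset.mem_union_right _ (Finset.mem_image.2
            ⟨i', Finset.mem_filter.2 ⟨Finset.mem_univ _, h2⟩, rfl⟩)
      rw [hEeq]
      exact Finset.insert_subset (hsub hx₁) (Finset.insert_subset (hsub hx₂)
        (Finset.singleton_subset_iff.2 (Finset.mem_union_right _ (Finset.mem_image.2
          ⟨i, Finset.mem_filter.2 ⟨Finset.mem_univ _, him⟩, rfl⟩))))
    set EU : Finset (Finset V) := (Finset.univ.image wE) ∪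
      ((Finset.filter (fun i : Fin (C \ Y).card => (i : ℕ) < m) Finset.univ).image zE) with hEU
    have hdisj : Disjoint (Finset.univ.image wE)
        ((Finset.filter (fun i : Fin (C \ Y).card => (i : ℕ) < m) Finset.univ).image zE) := by
      rw [Finset.disjoint_left]
      intro e he1 he2
      rcases Finset.mem_image.1 he1 with ⟨i, _, rfl⟩
      rcases Finset.mem_image.1 he2 with ⟨i', _, heq⟩
      have hzi : z i' ∈ wE i := heq ▸ hzEmem i'
      have : z i' ∈ CX := hwEsub i hzi
      exact (Finset.mem_sdiff.1 (hzMem i')).2 (hCXY this)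
    have hcardEU : EU.card = (CX \ X).card + m := by
      rw [hEU, Finset.card_union_of_disjoint hdisj,
        Finset.card_image_of_injective _ hwEinj,
        Finset.card_image_of_injective _ hzEinj, Finset.card_univ, Fintype.card_fin,
        card_filter_val_lt _ _ hm]
    have hwt : (CX \ X).card + m ≤ hWeight T Um := by
      rw [← hcardEU]
      apply weight_lower
      intro e he
      rcases Finset.mem_union.1 he with he | he
      · rcases Finset.mem_image.1 he with ⟨i, _, rfl⟩
        exact ⟨hwT i, (hwEsub i).trans (hCXY.trans Finset.subset_union_left)⟩
      · rcases Finset.mem_image.1 he with ⟨i, hi, rfl⟩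
        exact ⟨hzT i, hzEUm i (Finset.mem_filter.1 hi).2⟩
    have hUmcard : Um.card ≤ 2 * X.card + 2 := by
      have h1 : Um.card ≤ Y.card + ((Finset.filter (fun i : Fin (C \ Y).card => (i : ℕ) < m)
          Finset.univ).image z).card := Finset.card_union_le _ _
      have h2 : ((Finset.filter (fun i : Fin (C \ Y).card => (i : ℕ) < m)
          Finset.univ).image z).card ≤ m := by
        refine le_trans (Finset.card_image_le) ?_
        rw [card_filter_val_lt _ _ hm]
      omega
    have hdense : HDense T Um := by
      refine le_trans hUmcard ?_
      have : 2 * X.card + 2 = 2 * ((CX \ X).card + m) := by omega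
      rw [this]
      exact Nat.mul_le_mul_left 2 hwt
    exact hmeager Um ⟨z₀, Finset.mem_union_left _ hz₀Y⟩ (by omega) hdense
  have hzEsub : ∀ i, zE i ⊆ C := by
    intro i
    obtain ⟨a, ha, b, hb, _, hEeq⟩ := hzWit i
    have hP : Y ∪ (Finset.univ.filter (fun i' => i' < i)).image z ⊆ C := by
      apply Finset.union_subset hYC
      intro v hv
      rcases Finset.mem_image.1 hv with ⟨i', _, rfl⟩
      exact hzD i'
    rw [hEeq]
    exact Finset.insert_subset (hP ha) (Finset.insert_subset (hP hb)
      (Finset.singleton_subset_iff.2 (hzD i)))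
  have hZfacts : ∀ (i : Fin (C \ Y).card) (e : Finset V), e ∈ T →
      (∃ x₁ ∈ Y ∪ (Finset.univ.filter (fun i' => i' < i)).image z,
        ∃ x₂ ∈ Y ∪ (Finset.univ.filter (fun i' => i' < i)).image z,
        x₁ ≠ x₂ ∧ e = {x₁, x₂, z i}) →
      (z i ∈ e) ∧
      (∀ u ∈ e, u = z i ∨ u ∈ Y ∪ (Finset.univ.filter (fun i' => i' < i)).image z) ∧
      (∃ u ∈ e, u ≠ z i ∧ u ∈ C ∧ u ∉ CX) := by
    rintro i e heT ⟨a, ha, b, hb, hab, heq⟩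
    have hPC : Y ∪ (Finset.univ.filter (fun i' => i' < i)).image z ⊆ C := by
      apply Finset.union_subset hYC
      intro v hv
      rcases Finset.mem_image.1 hv with ⟨i', _, rfl⟩
      exact hzD i'
    have hzinotP : z i ∉ Y ∪ (Finset.univ.filter (fun i' => i' < i)).image z := hzNot i
    refine ⟨?_, ?_, ?_⟩
    · rw [heq]
      exact Finset.mem_insert.2 (Or.inr (Finset.mem_insert.2 (Or.inr (Finset.mem_singleton_self _))))
    · intro u hu
      rw [heq] at hu
      rcases Finset.mem_insert.1 hu with rfl | hu
      · exact Or.inr ha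
      rcases Finset.mem_insert.1 hu with rfl | hu
      · exact Or.inr hb
      · exact Or.inl (Finset.mem_singleton.1 hu)
    · have hnotboth : ¬ (a ∈ CX ∧ b ∈ CX) := by
        rintro ⟨haCX, hbCX⟩
        have : Attracts T CX (z i) := ⟨a, haCX, b, hbCX, hab, heq ▸ heT⟩
        exact (Finset.mem_sdiff.1 (hzMem i)).2 (hCXY (hCXcl _ this))
      have : (a ∈ C ∧ a ∉ CX) ∨ (b ∈ C ∧ b ∉ CX) := by
        by_cases haCX : a ∈ CX
        · exact Or.inr ⟨hPC hb, fun hbCX => hnotboth ⟨haCX, hbCX⟩⟩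
        · exact Or.inl ⟨hPC ha, haCX⟩
      rcases this with ⟨h1, h2⟩ | ⟨h1, h2⟩
      · exact ⟨a, heq ▸ Finset.mem_insert_self _ _, fun hc => hzinotP (hc ▸ ha), h1, h2⟩
      · exact ⟨b, heq ▸ Finset.mem_insert.2 (Or.inr (Finset.mem_insert_self _ _)),
          fun hc => hzinotP (hc ▸ hb), h1, h2⟩
  -- rank and edge-assignment functions
  have hziNCXX : ∀ i : Fin (C \ Y).card, z i ∉ CX \ X := by
    intro i hc
    exact (Finset.mem_sdiff.1 (hzMem i)).2 (hCXY (Finset.mem_sdiff.1 hc).1)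
  set rank : V → ℕ := fun v => if hv : v ∈ CX \ X then ((hwSurj v hv).choose : ℕ) + 1
    else if hv2 : v ∈ C \ Y then (CX \ X).card + 2 + ((hzSurj v hv2).choose : ℕ)
    else 0 with hrankdef
  have hrw : ∀ i, rank (w i) = (i : ℕ) + 1 := by
    intro i
    rw [hrankdef]
    simp only
    rw [dif_pos (hwMem i)]
    have hcs := (hwSurj (w i) (hwMem i)).choose_spec
    rw [hwInj hcs]
  have hrz : ∀ i, rank (z i) = (CX \ X).card + 2 + (i : ℕ) := by
    intro i
    rw [hrankdef]
    simp only
    rw [dif_neg (hziNCXX i), dif_pos (hzMem i)]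
    have hcs := (hzSurj (z i) (hzMem i)).choose_spec
    rw [hzInj hcs]
  have hrY : ∀ v ∈ Y, rank v ≤ (CX \ X).card + 1 := by
    intro v hv
    rw [hrankdef]
    simp only
    split_ifs with h1 h2
    · have := ((hwSurj v h1).choose).2
      omega
    · exact absurd hv (Finset.mem_sdiff.1 h2).2
    · omega
  set f : V → Finset V := fun v => if hv : v ∈ CX \ X then wE (hwSurj v hv).choose
    else if hv2 : v ∈ C \ Y then zE (hzSurj v hv2).choose else ∅ with hfdef
  have hfw : ∀ i, f (w i) = wE i := by
    intro i
    rw [hfdef]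
    simp only
    rw [dif_pos (hwMem i)]
    have hcs := (hwSurj (w i) (hwMem i)).choose_spec
    rw [hwInj hcs]
  have hfz : ∀ i, f (z i) = zE i := by
    intro i
    rw [hfdef]
    simp only
    rw [dif_neg (hziNCXX i), dif_pos (hzMem i)]
    have hcs := (hzSurj (z i) (hzMem i)).choose_spec
    rw [hzInj hcs]
  have hf0 : ∀ v, v ∉ CX \ X → v ∉ C \ Y → f v = ∅ := by
    intro v h1 h2
    rw [hfdef]
    simp only
    rw [dif_neg h1, dif_neg h2]
  have hfC : ∀ v, f v ⊆ C := by
    intro v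
    rw [hfdef]
    simp only
    split_ifs with h1 h2
    · exact (hwEsub _).trans (hCXY.trans hYC)
    · exact hzEsub _
    · exact Finset.empty_subset _
  have hfT' : ∀ v, v ∈ CX \ X ∨ v ∈ C \ Y → f v ∈ T := by
    intro v hv
    rcases hv with hv | hv
    · obtain ⟨i, rfl⟩ := hwSurj v hv
      rw [hfw]; exact hwT i
    · obtain ⟨i, rfl⟩ := hzSurj v hv
      rw [hfz]; exact hzT i
  have hfmem : ∀ v, v ∈ CX \ X ∨ v ∈ C \ Y → v ∈ f v := by
    intro v hv
    rcases hv with hv | hv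
    · obtain ⟨i, rfl⟩ := hwSurj v hv
      rw [hfw]; exact hwEmem i
    · obtain ⟨i, rfl⟩ := hzSurj v hv
      rw [hfz]; exact hzEmem i
  have hTopf : ∀ v, v ∈ CX \ X ∨ v ∈ C \ Y → ∀ u ∈ f v, u = v ∨ rank u < rank v := by
    intro v hv u hu
    rcases hv with hv | hv
    · obtain ⟨i, rfl⟩ := hwSurj v hv
      rw [hfw] at hu
      obtain ⟨a, ha, b, hb, _, hEeq⟩ := hwWit i
      rw [hEeq] at hu
      have hcase : ∀ x, x ∈ X ∪ (Finset.univ.filter (fun i'' => i'' < i)).image w →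
          rank x < rank (w i) := by
        intro x hx
        rw [hrw]
        rcases Finset.mem_union.1 hx with hx | hx
        · have hx1 : x ∉ CX \ X := fun hc => (Finset.mem_sdiff.1 hc).2 hx
          have hx2 : x ∉ C \ Y := fun hc => (Finset.mem_sdiff.1 hc).2 (hCXY (hXCX hx))
          rw [hrankdef]
          simp only
          rw [dif_neg hx1, dif_neg hx2]
          omega
        · rcases Finset.mem_image.1 hx with ⟨i'', hi'', rfl⟩
          rw [hrw]
          have : (i'' : ℕ) < (i : ℕ) := (Finset.mem_filter.1 hi'').2
          omega
      rcases Finset.mem_insert.1 hu with rfl | hu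
      · exact Or.inr (hcase u ha)
      rcases Finset.mem_insert.1 hu with rfl | hu
      · exact Or.inr (hcase u hb)
      · exact Or.inl (Finset.mem_singleton.1 hu)
    · obtain ⟨i, rfl⟩ := hzSurj v hv
      rw [hfz] at hu
      obtain ⟨a, ha, b, hb, _, hEeq⟩ := hzWit i
      rw [hEeq] at hu
      have hcase : ∀ x, x ∈ Y ∪ (Finset.univ.filter (fun i'' => i'' < i)).image z →
          rank x < rank (z i) := by
        intro x hx
        rw [hrz]
        rcases Finset.mem_union.1 hx with hx | hx
        · have := hrY x hx
          omega
        · rcases Finset.mem_image.1 hx with ⟨i'', hi'', rfl⟩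
          rw [hrz]
          have : (i'' : ℕ) < (i : ℕ) := (Finset.mem_filter.1 hi'').2
          omega
      rcases Finset.mem_insert.1 hu with rfl | hu
      · exact Or.inr (hcase u ha)
      rcases Finset.mem_insert.1 hu with rfl | hu
      · exact Or.inr (hcase u hb)
      · exact Or.inl (Finset.mem_singleton.1 hu)
  -- splitting lemma
  have hsplit : ∀ D : Finset V, D ⊆ C →
      D.card = (D ∩ X).card + (D ∩ (CX \ X)).card + (D ∩ (C \ CX)).card := by
    intro D hD
    have e1 : (D ∩ CX).card + (D \ CX).card = D.card := Finset.card_inter_add_card_sdiff D CX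
    have e2 : ((D ∩ CX) ∩ X).card + ((D ∩ CX) \ X).card = (D ∩ CX).card :=
      Finset.card_inter_add_card_sdiff _ X
    have e3 : (D ∩ CX) ∩ X = D ∩ X := by
      ext u
      simp only [Finset.mem_inter]
      exact ⟨fun ⟨⟨h1, _⟩, h3⟩ => ⟨h1, h3⟩, fun ⟨h1, h3⟩ => ⟨⟨h1, hXCX h3⟩, h3⟩⟩
    have e4 : (D ∩ CX) \ X = D ∩ (CX \ X) := by
      ext u
      simp only [Finset.mem_inter, Finset.mem_sdiff]
      tauto
    have e5 : D \ CX = D ∩ (C \ CX) := by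
      ext u
      simp only [Finset.mem_inter, Finset.mem_sdiff]
      exact ⟨fun ⟨h1, h2⟩ => ⟨h1, hD h1, h2⟩, fun ⟨h1, _, h3⟩ => ⟨h1, h3⟩⟩
    rw [e3, e4] at e2
    rw [e5] at e1
    omega
  -- the uniqueness core
  have huniq : ∀ (j : Fin (C \ Y).card) (g : Finset V), g ∈ T →
      (∃ x₁ ∈ Y ∪ (Finset.univ.filter (fun i => i < j)).image z,
        ∃ x₂ ∈ Y ∪ (Finset.univ.filter (fun i => i < j)).image z,
        x₁ ≠ x₂ ∧ g = {x₁, x₂, z j}) → g = zE j := by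
    intro j g hgT hgwit
    by_contra hne
    obtain ⟨hgzj, hgsub, hgC⟩ := hZfacts j g hgT hgwit
    obtain ⟨hzEzj, hzEsubP, hzEC⟩ := hZfacts j (zE j) (hzT j) (hzWit j)
    have hgC' : g ⊆ C := by
      intro u hu
      rcases hgsub u hu with rfl | hu'
      · exact hzD j
      · rcases Finset.mem_union.1 hu' with hu' | hu'
        · exact hYC hu'
        · rcases Finset.mem_image.1 hu' with ⟨i', _, rfl⟩
          exact hzD i'
    -- the saturated support set S
    obtain ⟨t, hts⟩ := grow_stable f (zE j ∪ g)
    set S : Finset V := grow_s12 f (zE j ∪ g) t with hSdef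
    have hS0S : zE j ∪ g ⊆ S := grow_base f _ t
    have hSf : ∀ v ∈ S, f v ⊆ S := by
      intro v hv u hu
      have h1 : u ∈ grow_s12 f (zE j ∪ g) (t+1) :=
        Finset.mem_union_right _ (Finset.mem_biUnion.2 ⟨v, hv, hu⟩)
      rw [hts] at h1
      exact h1
    have hSC : S ⊆ C := by
      apply grow_induct
      · exact Finset.union_subset (hzEsub j) hgC'
      · exact fun v _ => hfC v
    have hMsub : ∀ (i : Fin (C \ Y).card), (i : ℕ) ≤ (j : ℕ) →
        Y ∪ (Finset.univ.filter (fun i' => i' < i)).image z ⊆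
        Y ∪ (Finset.univ.filter (fun i' : Fin (C \ Y).card => (i' : ℕ) ≤ (j : ℕ))).image z := by
      intro i hij
      apply Finset.union_subset Finset.subset_union_left
      intro v hv
      rcases Finset.mem_image.1 hv with ⟨i', hi', rfl⟩
      have : (i' : ℕ) < (i : ℕ) := (Finset.mem_filter.1 hi').2
      exact Finset.mem_union_right _ (Finset.mem_image.2
        ⟨i', Finset.mem_filter.2 ⟨Finset.mem_univ _, by omega⟩, rfl⟩)
    have hSM : S ⊆ Y ∪ (Finset.univ.filter (fun i' : Fin (C \ Y).card => (i' : ℕ) ≤ (j : ℕ))).image z := by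
      apply grow_induct
      · apply Finset.union_subset
        · intro u hu
          rcases hzEsubP u hu with rfl | hu'
          · exact Finset.mem_union_right _ (Finset.mem_image.2
              ⟨j, Finset.mem_filter.2 ⟨Finset.mem_univ _, le_refl _⟩, rfl⟩)
          · exact hMsub j (le_refl _) hu'
        · intro u hu
          rcases hgsub u hu with rfl | hu'
          · exact Finset.mem_union_right _ (Finset.mem_image.2
              ⟨j, Finset.mem_filter.2 ⟨Finset.mem_univ _, le_refl _⟩, rfl⟩)
          · exact hMsub j (le_refl _) hu'
      · intro v hv
        by_cases h1 : v ∈ CX \ X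
        · obtain ⟨i, rfl⟩ := hwSurj v h1
          rw [hfw]
          exact (hwEsub i).trans ((hCXY.trans Finset.subset_union_left))
        · by_cases h2 : v ∈ C \ Y
          · obtain ⟨i, rfl⟩ := hzSurj v h2
            have hij : (i : ℕ) ≤ (j : ℕ) := by
              rcases Finset.mem_union.1 hv with hv' | hv'
              · exact absurd hv' (Finset.mem_sdiff.1 (hzMem i)).2
              · rcases Finset.mem_image.1 hv' with ⟨i', hi', hzi⟩
                have : i' = i := hzInj hzi
                subst this
                exact (Finset.mem_filter.1 hi').2
            rw [hfz]
            obtain ⟨a, ha, b, hb, _, hEeq⟩ := hzWit i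
            rw [hEeq]
            refine Finset.insert_subset (hMsub i hij ha)
              (Finset.insert_subset (hMsub i hij hb) (Finset.singleton_subset_iff.2 ?_))
            exact Finset.mem_union_right _ (Finset.mem_image.2
              ⟨i, Finset.mem_filter.2 ⟨Finset.mem_univ _, hij⟩, rfl⟩)
          · rw [hf0 v h1 h2]
            exact Finset.empty_subset _
    set SA : Finset V := S ∩ X with hSA
    set SB : Finset V := S ∩ (CX \ X) with hSB
    set SG : Finset V := S ∩ (C \ Y) with hSG
    set K : Finset V := SB ∪ SG with hK
    have hKor : ∀ v ∈ K, v ∈ CX \ X ∨ v ∈ C \ Y := by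
      intro v hv
      rcases Finset.mem_union.1 hv with hv | hv
      · exact Or.inl (Finset.mem_inter.1 hv).2
      · exact Or.inr (Finset.mem_inter.1 hv).2
    have hzjS : z j ∈ S := hS0S (Finset.mem_union_left _ hzEzj)
    have hzjSG : z j ∈ SG := Finset.mem_inter.2 ⟨hzjS, hzMem j⟩
    have hzjK : z j ∈ K := Finset.mem_union_right _ hzjSG
    have hKS : K ⊆ S := by
      intro v hv
      rcases Finset.mem_union.1 hv with hv | hv
      · exact (Finset.mem_inter.1 hv).1
      · exact (Finset.mem_inter.1 hv).1
    have hzjnY : z j ∉ Y := (Finset.mem_sdiff.1 (hzMem j)).2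
    -- cover lemma
    have hIcover : ∀ u ∈ S, u ≠ z j →
        u ∈ (g \ {z j}) ∪ K.biUnion (fun v => f v \ {v}) := by
      intro u hu hune
      rcases grow_mem_rec f (zE j ∪ g) t u hu with h0 | ⟨v, hvS, huf, hvu⟩
      · rcases Finset.mem_union.1 h0 with h0 | h0
        · refine Finset.mem_union_right _ (Finset.mem_biUnion.2 ⟨z j, hzjK, ?_⟩)
          rw [hfz]
          exact Finset.mem_sdiff.2 ⟨h0, fun hc => hune (Finset.mem_singleton.1 hc)⟩
        · exact Finset.mem_union_left _ (Finset.mem_sdiff.2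
            ⟨h0, fun hc => hune (Finset.mem_singleton.1 hc)⟩)
      · have hvK : v ∈ K := by
          by_cases h1 : v ∈ CX \ X
          · exact Finset.mem_union_left _ (Finset.mem_inter.2 ⟨hvS, h1⟩)
          · by_cases h2 : v ∈ C \ Y
            · exact Finset.mem_union_right _ (Finset.mem_inter.2 ⟨hvS, h2⟩)
            · rw [hf0 v h1 h2] at huf
              exact absurd huf (Finset.notMem_empty u)
        exact Finset.mem_union_right _ (Finset.mem_biUnion.2
          ⟨v, hvK, Finset.mem_sdiff.2 ⟨huf, fun hc => hvu (Finset.mem_singleton.1 hc).symm⟩⟩)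
    have hcover : ∀ W : Finset V, z j ∉ W →
        (S ∩ W).card ≤ ((g \ {z j}) ∩ W).card + ∑ v ∈ K, ((f v \ {v}) ∩ W).card := by
      intro W hzjW
      have hsub : S ∩ W ⊆ ((g \ {z j}) ∩ W) ∪ K.biUnion (fun v => (f v \ {v}) ∩ W) := by
        intro u hu
        obtain ⟨huS, huW⟩ := Finset.mem_inter.1 hu
        have hune : u ≠ z j := fun hc => hzjW (hc ▸ huW)
        rcases Finset.mem_union.1 (hIcover u huS hune) with h0 | h0
        · exact Finset.mem_union_left _ (Finset.mem_inter.2 ⟨h0, huW⟩)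
        · rcases Finset.mem_biUnion.1 h0 with ⟨v, hv, h1⟩
          exact Finset.mem_union_right _ (Finset.mem_biUnion.2
            ⟨v, hv, Finset.mem_inter.2 ⟨h1, huW⟩⟩)
      calc (S ∩ W).card ≤ (((g \ {z j}) ∩ W) ∪ K.biUnion (fun v => (f v \ {v}) ∩ W)).card :=
            Finset.card_le_card hsub
        _ ≤ ((g \ {z j}) ∩ W).card + (K.biUnion (fun v => (f v \ {v}) ∩ W)).card :=
            Finset.card_union_le _ _
        _ ≤ ((g \ {z j}) ∩ W).card + ∑ v ∈ K, ((f v \ {v}) ∩ W).card := by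
            exact Nat.add_le_add_left (Finset.card_biUnion_le) _
    -- per-edge identities
    have hedge2 : ∀ v ∈ K, ((f v \ {v}) ∩ X).card + ((f v \ {v}) ∩ (CX \ X)).card +
        ((f v \ {v}) ∩ (C \ CX)).card = 2 := by
      intro v hv
      have hor := hKor v hv
      have hD : f v \ {v} ⊆ C := (Finset.sdiff_subset).trans (hfC v)
      have hc3 : (f v).card = 3 := hT _ (hfT' v hor)
      have hc2 : (f v \ {v}).card = 2 := by
        rw [Finset.card_sdiff_of_subset (Finset.singleton_subset_iff.2 (hfmem v hor))]
        rw [hc3]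
        rfl
      rw [← hsplit _ hD, hc2]
    have hgedge2 : ((g \ {z j}) ∩ X).card + ((g \ {z j}) ∩ (CX \ X)).card +
        ((g \ {z j}) ∩ (C \ CX)).card = 2 := by
      have hD : g \ {z j} ⊆ C := (Finset.sdiff_subset).trans hgC'
      have hc3 : g.card = 3 := hT _ hgT
      have hc2 : (g \ {z j}).card = 2 := by
        rw [Finset.card_sdiff_of_subset (Finset.singleton_subset_iff.2 hgzj), hc3]
        rfl
      rw [← hsplit _ hD, hc2]
    -- the three inequalities
    have hI1 : SA.card ≤ ((g \ {z j}) ∩ X).card + ∑ v ∈ K, ((f v \ {v}) ∩ X).card :=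
      hcover X (fun hc => hzjnY (hXY hc))
    have hI2 : SB.card ≤ ((g \ {z j}) ∩ (CX \ X)).card +
        ∑ v ∈ K, ((f v \ {v}) ∩ (CX \ X)).card :=
      hcover (CX \ X) (fun hc => hzjnY (hCXY (Finset.mem_sdiff.1 hc).1))
    have hI3 : SG.card + 1 ≤ ((g \ {z j}) ∩ (C \ CX)).card +
        ∑ v ∈ K, ((f v \ {v}) ∩ (C \ CX)).card := by
      have hch : 1 ≤ ((g \ {z j}) ∩ (C \ CX)).card := by
        obtain ⟨u, hu, hune, huC, hunCX⟩ := hgC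
        exact Finset.card_pos.2 ⟨u, Finset.mem_inter.2
          ⟨Finset.mem_sdiff.2 ⟨hu, fun hc => hune (Finset.mem_singleton.1 hc)⟩,
           Finset.mem_sdiff.2 ⟨huC, hunCX⟩⟩⟩
      have hcK : SG.card ≤ ∑ v ∈ K, ((f v \ {v}) ∩ (C \ CX)).card := by
        have h1 : ∀ v ∈ SG, 1 ≤ ((f v \ {v}) ∩ (C \ CX)).card := by
          intro v hv
          have hvCY : v ∈ C \ Y := (Finset.mem_inter.1 hv).2
          obtain ⟨i, rfl⟩ := hzSurj v hvCY
          obtain ⟨_, _, hzc⟩ := hZfacts i (zE i) (hzT i) (hzWit i)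
          obtain ⟨u, hu, hune, huC, hunCX⟩ := hzc
          rw [hfz]
          exact Finset.card_pos.2 ⟨u, Finset.mem_inter.2
            ⟨Finset.mem_sdiff.2 ⟨hu, fun hc => hune (Finset.mem_singleton.1 hc)⟩,
             Finset.mem_sdiff.2 ⟨huC, hunCX⟩⟩⟩
        calc SG.card = ∑ _v ∈ SG, 1 := by rw [Finset.sum_const, smul_eq_mul, mul_one]
          _ ≤ ∑ v ∈ SG, ((f v \ {v}) ∩ (C \ CX)).card := Finset.sum_le_sum h1
          _ ≤ ∑ v ∈ K, ((f v \ {v}) ∩ (C \ CX)).card :=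
              Finset.sum_le_sum_of_subset Finset.subset_union_right
        
      omega
    have hsumid : ∑ v ∈ K, ((f v \ {v}) ∩ X).card + ∑ v ∈ K, ((f v \ {v}) ∩ (CX \ X)).card +
        ∑ v ∈ K, ((f v \ {v}) ∩ (C \ CX)).card = 2 * K.card := by
      rw [← Finset.sum_add_distrib, ← Finset.sum_add_distrib]
      rw [Finset.sum_congr rfl hedge2]
      rw [Finset.sum_const, smul_eq_mul, mul_comm]
    have hKdisj : Disjoint SB SG := by
      rw [Finset.disjoint_left]
      intro v hv1 hv2
      exact (Finset.mem_sdiff.1 (Finset.mem_inter.1 hv2).2).2 (hCXY (Finset.mem_sdiff.1 (Finset.mem_inter.1 hv1).2).1)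
    have hKcard : K.card = SB.card + SG.card := Finset.card_union_of_disjoint hKdisj
    have hSAcard : SA.card ≤ SB.card + SG.card + 1 := by omega
    -- the edge set and weight
    have hgnotim : g ∉ K.image f := by
      intro hc
      rcases Finset.mem_image.1 hc with ⟨v, hvK, hfvg⟩
      have hzjg : z j ∈ g := hgzj
      rcases hKor v hvK with hv | hv
      · obtain ⟨i, rfl⟩ := hwSurj v hv
        rw [hfw] at hfvg
        have : z j ∈ CX := hwEsub i (hfvg ▸ hzjg)
        exact hzjnY (hCXY this)
      · obtain ⟨i, rfl⟩ := hzSurj v hv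
        rw [hfz] at hfvg
        have hji : (j : ℕ) ≤ (i : ℕ) := hzTopLe i j (hfvg ▸ hzjg)
        have hij : (i : ℕ) ≤ (j : ℕ) := by
          have hziS : z i ∈ S := hKS hvK
          rcases Finset.mem_union.1 (hSM hziS) with hv' | hv'
          · exact absurd hv' (Finset.mem_sdiff.1 (hzMem i)).2
          · rcases Finset.mem_image.1 hv' with ⟨i', hi', hzi⟩
            have : i' = i := hzInj hzi
            subst this
            exact (Finset.mem_filter.1 hi').2
        have : i = j := Fin.ext (by omega)
        subst this
        exact hne hfvg.symm
    have hfinjK : Set.InjOn f K := by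
      intro v1 hv1 v2 hv2 hfeq
      have h1 := hTopf v1 (hKor v1 hv1) v2 (hfeq ▸ hfmem v2 (hKor v2 hv2))
      have h2 := hTopf v2 (hKor v2 hv2) v1 (hfeq ▸ hfmem v1 (hKor v1 hv1))
      rcases h1 with h1 | h1
      · exact h1.symm
      rcases h2 with h2 | h2
      · exact h2
      · omega
    have hEcard : (insert g (K.image f)).card = K.card + 1 := by
      rw [Finset.card_insert_of_notMem hgnotim, Finset.card_image_of_injOn hfinjK]
    have hwt : K.card + 1 ≤ hWeight T S := by
      rw [← hEcard]
      apply weight_lower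
      intro e he
      rcases Finset.mem_insert.1 he with rfl | he
      · exact ⟨hgT, (Finset.union_subset_iff.1 (fun u hu => hS0S hu)).2⟩
      · rcases Finset.mem_image.1 he with ⟨v, hvK, rfl⟩
        exact ⟨hfT' v (hKor v hvK), hSf v (hKS hvK)⟩
    -- S is small and dense
    have hScover : S ⊆ SA ∪ SB ∪ SG ∪ {z₀} := by
      intro u hu
      have huC : u ∈ C := hSC hu
      by_cases h1 : u ∈ CX
      · by_cases h2 : u ∈ X
        · exact Finset.mem_union_left _ (Finset.mem_union_left _ (Finset.mem_union_left _
            (Finset.mem_inter.2 ⟨hu, h2⟩)))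
        · exact Finset.mem_union_left _ (Finset.mem_union_left _ (Finset.mem_union_right _
            (Finset.mem_inter.2 ⟨hu, Finset.mem_sdiff.2 ⟨h1, h2⟩⟩)))
      · by_cases h3 : u ∈ Y
        · have : u = z₀ := by
            rw [hY] at h3
            rcases Finset.mem_insert.1 h3 with h3 | h3
            · exact h3
            · exact absurd h3 h1
          exact Finset.mem_union_right _ (this ▸ Finset.mem_singleton_self _)
        · exact Finset.mem_union_left _ (Finset.mem_union_right _
            (Finset.mem_inter.2 ⟨hu, Finset.mem_sdiff.2 ⟨huC, h3⟩⟩))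
    have hScard : S.card ≤ SA.card + SB.card + SG.card + 1 := by
      calc S.card ≤ (SA ∪ SB ∪ SG ∪ {z₀}).card := Finset.card_le_card hScover
        _ ≤ (SA ∪ SB ∪ SG).card + ({z₀} : Finset V).card := Finset.card_union_le _ _
        _ ≤ (SA ∪ SB).card + SG.card + 1 := by
            have := Finset.card_union_le (SA ∪ SB) SG
            simp only [Finset.card_singleton]
            omega
        _ ≤ SA.card + SB.card + SG.card + 1 := by
            have := Finset.card_union_le SA SB
            omega
    have hdense : HDense T S := by
      rw [HDense]
      have : S.card ≤ 2 * (K.card + 1) := by omega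
      calc S.card ≤ 2 * (K.card + 1) := this
        _ ≤ 2 * hWeight T S := Nat.mul_le_mul_left 2 hwt
    have hSBle : SB.card ≤ (CX \ X).card := Finset.card_le_card Finset.inter_subset_right
    have hSGle : SG.card ≤ (C \ Y).card := Finset.card_le_card Finset.inter_subset_right
    have hSsmall : S.card ≤ 2 * (2 * k) := by omega
    exact hmeager S ⟨z j, hzjS⟩ hSsmall hdense
  refine ⟨by omega, z, hzInj, hzMem, ?_⟩
  intro j
  refine ⟨zE j, ⟨hzT j, hzWit j⟩, ?_⟩
  rintro g ⟨hgT, hgw⟩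
  exact huniq j g hgT hgw
end

section
/- Let ε < 1/(2l+3) be a positive real and form a random 3-uniform hypergraph on n vertices by including each 3-element set independently with probability p = n^{−2+ε}. Then, as n → ∞, the probability that the hypergraph is (2l+2)-modest (has no super-dense vertex set of cardinality ≤ 4l+4) tends to 1. -/
open scoped Classical
open Finset

/-- The probability of the event `A` for the random 3-uniform hypergraph on
`Fin n` in which each 3-element vertex set is a hyperedge independently with
probability `p`. -/
noncomputable def probEvent (n : ℕ) (p : ℝ)
    (A : Finset (Finset (Fin n)) → Prop) : ℝ :=
  ∑ T ∈ ((Finset.univ : Finset (Fin n)).powersetCard 3).powerset,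
    if A T then
      p ^ T.card *
        (1 - p) ^ (((Finset.univ : Finset (Fin n)).powersetCard 3).card - T.card)
    else 0

namespace Stmt14Aux

variable {α : Type*} [DecidableEq α]

lemma sum_weight (s : Finset α) (p : ℝ) :
    ∑ T ∈ s.powerset, p ^ T.card * (1 - p) ^ (s.card - T.card) = 1 := by
  rw [Finset.sum_pow_mul_eq_add_pow]
  simp

lemma sum_weight_subset (s S : Finset α) (hS : S ⊆ s) (p : ℝ) :
    (∑ T ∈ s.powerset,
      if S ⊆ T then p ^ T.card * (1 - p) ^ (s.card - T.card) else 0)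
      = p ^ S.card := by
  rw [← Finset.sum_filter]
  have h : ∑ T ∈ s.powerset.filter (S ⊆ ·), p ^ T.card * (1 - p) ^ (s.card - T.card)
      = ∑ U ∈ (s \ S).powerset,
          p ^ (U.card + S.card) * (1 - p) ^ ((s \ S).card - U.card) := by
    refine Finset.sum_nbij' (fun T => T \ S) (fun U => U ∪ S) ?_ ?_ ?_ ?_ ?_
    · intro T hT
      simp only [mem_filter, mem_powerset] at hT ⊢
      exact sdiff_subset_sdiff hT.1 (Finset.Subset.refl S)
    · intro U hU
      simp only [mem_filter, mem_powerset] at hU ⊢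
      exact ⟨Finset.union_subset (hU.trans sdiff_subset) hS, subset_union_right⟩
    · intro T hT
      simp only [mem_filter, mem_powerset] at hT
      exact Finset.sdiff_union_of_subset hT.2
    · intro U hU
      simp only [mem_powerset] at hU
      have : Disjoint U S := Finset.disjoint_of_subset_left hU Finset.sdiff_disjoint
      exact Finset.union_sdiff_cancel_right this
    · intro T hT
      simp only [mem_filter, mem_powerset] at hT
      have h1 : (T \ S).card = T.card - S.card := Finset.card_sdiff_of_subset hT.2
      have h2 : S.card ≤ T.card := Finset.card_le_card hT.2
      have h3 : T.card ≤ s.card := Finset.card_le_card hT.1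
      have h4 : (s \ S).card = s.card - S.card := Finset.card_sdiff_of_subset hS
      rw [h1, h4]
      congr 1
      · congr 1; omega
      · congr 1; omega
  rw [h]
  have h5 : ∀ U ∈ (s \ S).powerset,
      p ^ (U.card + S.card) * (1 - p) ^ ((s \ S).card - U.card)
      = p ^ S.card * (p ^ U.card * (1 - p) ^ ((s \ S).card - U.card)) := by
    intro U _; ring
  rw [Finset.sum_congr rfl h5, ← Finset.mul_sum, sum_weight, mul_one]

abbrev EE (n : ℕ) : Finset (Finset (Fin n)) :=
  (Finset.univ : Finset (Fin n)).powersetCard 3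

noncomputable abbrev ww (n : ℕ) (p : ℝ) (T : Finset (Finset (Fin n))) : ℝ :=
  p ^ T.card * (1 - p) ^ ((EE n).card - T.card)

lemma w_nonneg {n : ℕ} {p : ℝ} (hp0 : 0 ≤ p) (hp1 : p ≤ 1) (T : Finset (Finset (Fin n))) :
    0 ≤ ww n p T := by
  have : (0:ℝ) ≤ 1 - p := by linarith
  positivity

lemma probEvent_add_compl (n : ℕ) (p : ℝ) (A : Finset (Finset (Fin n)) → Prop) :
    probEvent n p A + probEvent n p (fun T => ¬ A T) = 1 := by
  unfold probEvent
  rw [← Finset.sum_add_distrib]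
  refine (Finset.sum_congr rfl fun T _ => ?_).trans (sum_weight (EE n) p)
  by_cases h : A T <;> simp [h]

lemma probEvent_le_one {n : ℕ} {p : ℝ} (hp0 : 0 ≤ p) (hp1 : p ≤ 1)
    (A : Finset (Finset (Fin n)) → Prop) :
    probEvent n p A ≤ 1 := by
  unfold probEvent
  calc (∑ T ∈ (EE n).powerset, if A T then ww n p T else 0)
      ≤ ∑ T ∈ (EE n).powerset, ww n p T := by
        refine Finset.sum_le_sum fun T _ => ?_
        split
        · exact le_refl _
        · exact w_nonneg hp0 hp1 T
    _ = 1 := sum_weight _ _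

lemma badX_bound {n : ℕ} {p : ℝ} (hp0 : 0 ≤ p) (hp1 : p ≤ 1) (X : Finset (Fin n)) :
    (∑ T ∈ (EE n).powerset,
      if X.card < 2 * (T.filter (· ⊆ X)).card then ww n p T else 0)
    ≤ (Nat.choose (Nat.choose X.card 3) (X.card / 2 + 1)) * p ^ (X.card / 2 + 1) := by
  set k := X.card / 2 + 1 with hk
  have hstep : ∀ T ∈ (EE n).powerset,
      (if X.card < 2 * (T.filter (· ⊆ X)).card then ww n p T else 0)
      ≤ ∑ S ∈ (X.powersetCard 3).powersetCard k,
          (if S ⊆ T then ww n p T else 0) := by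
    intro T hT
    split
    · next hbad =>
      have hck : k ≤ (T.filter (· ⊆ X)).card := by omega
      obtain ⟨S, hS1, hS2⟩ := Finset.exists_subset_card_eq hck
      have hmem : S ∈ (X.powersetCard 3).powersetCard k := by
        rw [Finset.mem_powersetCard]
        refine ⟨fun e he => ?_, hS2⟩
        have he' := hS1 he
        rw [Finset.mem_filter] at he'
        have heE : e ∈ EE n := (Finset.mem_powerset.mp hT) he'.1
        rw [Finset.mem_powersetCard] at heE
        rw [Finset.mem_powersetCard]
        exact ⟨he'.2, heE.2⟩
      have hST : S ⊆ T := hS1.trans (Finset.filter_subset _ _)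
      have hle : (if S ⊆ T then ww n p T else 0)
          ≤ ∑ S' ∈ (X.powersetCard 3).powersetCard k, (if S' ⊆ T then ww n p T else 0) := by
        refine Finset.single_le_sum (f := fun S' => if S' ⊆ T then ww n p T else 0)
          (fun S' _ => ?_) hmem
        split
        · exact w_nonneg hp0 hp1 T
        · exact le_refl _
      rw [if_pos hST] at hle
      exact hle
    · next =>
      refine Finset.sum_nonneg fun S _ => ?_
      split
      · exact w_nonneg hp0 hp1 T
      · exact le_refl _
  calc (∑ T ∈ (EE n).powerset,
        if X.card < 2 * (T.filter (· ⊆ X)).card then ww n p T else 0)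
      ≤ ∑ T ∈ (EE n).powerset, ∑ S ∈ (X.powersetCard 3).powersetCard k,
          (if S ⊆ T then ww n p T else 0) := Finset.sum_le_sum hstep
    _ = ∑ S ∈ (X.powersetCard 3).powersetCard k, ∑ T ∈ (EE n).powerset,
          (if S ⊆ T then ww n p T else 0) := Finset.sum_comm
    _ = ∑ S ∈ (X.powersetCard 3).powersetCard k, p ^ S.card := by
        refine Finset.sum_congr rfl fun S hS => ?_
        refine sum_weight_subset _ _ ?_ p
        rw [Finset.mem_powersetCard] at hS
        intro e he
        have := hS.1 he
        rw [Finset.mem_powersetCard] at this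
        rw [Finset.mem_powersetCard]
        exact ⟨Finset.subset_univ _, this.2⟩
    _ = ((X.powersetCard 3).powersetCard k).card * p ^ k := by
        rw [Finset.sum_congr rfl fun S hS => ?_, Finset.sum_const, nsmul_eq_mul]
        rw [(Finset.mem_powersetCard.mp hS).2]
    _ = (Nat.choose (Nat.choose X.card 3) k) * p ^ k := by
        rw [Finset.card_powersetCard, Finset.card_powersetCard]

lemma compl_bound {n : ℕ} {p : ℝ} (hp0 : 0 ≤ p) (hp1 : p ≤ 1) (L : ℕ) :
    probEvent n p (fun T => ¬ ∀ X : Finset (Fin n), X.card ≤ L →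
        ¬ X.card < 2 * (T.filter (· ⊆ X)).card)
    ≤ ∑ s ∈ Finset.range (L+1),
        (n:ℝ)^s * ((Nat.choose (Nat.choose s 3) (s/2+1)) * p^(s/2+1)) := by
  classical
  set 𝒳 := (Finset.univ : Finset (Finset (Fin n))).filter (fun X => X.card ≤ L) with h𝒳
  have step1 : probEvent n p (fun T => ¬ ∀ X : Finset (Fin n), X.card ≤ L →
        ¬ X.card < 2 * (T.filter (· ⊆ X)).card)
      ≤ ∑ X ∈ 𝒳, ∑ T ∈ (EE n).powerset,
          (if X.card < 2 * (T.filter (· ⊆ X)).card then ww n p T else 0) := by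
    rw [← Finset.sum_comm]
    unfold probEvent
    refine Finset.sum_le_sum fun T hT => ?_
    split
    · next hbad =>
      push_neg at hbad
      obtain ⟨X, hXL, hb⟩ := hbad
      have hX𝒳 : X ∈ 𝒳 := by simp [h𝒳, hXL]
      have hle : (if X.card < 2 * (T.filter (· ⊆ X)).card then ww n p T else 0)
          ≤ ∑ X' ∈ 𝒳, (if X'.card < 2 * (T.filter (· ⊆ X')).card then ww n p T else 0) := by
        refine Finset.single_le_sum
          (f := fun X' => if X'.card < 2 * (T.filter (· ⊆ X')).card then ww n p T else 0)
          (fun X' _ => ?_) hX𝒳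
        split
        · exact w_nonneg hp0 hp1 T
        · exact le_refl _
      rw [if_pos hb] at hle
      exact hle
    · next =>
      refine Finset.sum_nonneg fun X _ => ?_
      split
      · exact w_nonneg hp0 hp1 T
      · exact le_refl _
  have step2 : ∑ X ∈ 𝒳, ∑ T ∈ (EE n).powerset,
          (if X.card < 2 * (T.filter (· ⊆ X)).card then ww n p T else 0)
      ≤ ∑ X ∈ 𝒳, ((Nat.choose (Nat.choose X.card 3) (X.card/2+1)) * p^(X.card/2+1) : ℝ) :=
    Finset.sum_le_sum fun X _ => badX_bound hp0 hp1 X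
  have step3 : ∑ X ∈ 𝒳, ((Nat.choose (Nat.choose X.card 3) (X.card/2+1)) * p^(X.card/2+1) : ℝ)
      ≤ ∑ s ∈ Finset.range (L+1),
        (n:ℝ)^s * ((Nat.choose (Nat.choose s 3) (s/2+1)) * p^(s/2+1)) := by
    have hmaps : ∀ X ∈ 𝒳, X.card ∈ Finset.range (L+1) := by
      intro X hX
      rw [h𝒳, Finset.mem_filter] at hX
      rw [Finset.mem_range]
      omega
    rw [← Finset.sum_fiberwise_of_maps_to hmaps
      (fun X => ((Nat.choose (Nat.choose X.card 3) (X.card/2+1)) * p^(X.card/2+1) : ℝ))]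
    refine Finset.sum_le_sum fun s _ => ?_
    have hcongr : ∑ X ∈ 𝒳.filter (fun X => X.card = s),
        ((Nat.choose (Nat.choose X.card 3) (X.card/2+1)) * p^(X.card/2+1) : ℝ)
        = (𝒳.filter (fun X => X.card = s)).card *
            ((Nat.choose (Nat.choose s 3) (s/2+1)) * p^(s/2+1) : ℝ) := by
      rw [Finset.sum_congr rfl (fun X hX => ?_), Finset.sum_const, nsmul_eq_mul]
      rw [(Finset.mem_filter.mp hX).2]
    rw [hcongr]
    have hcard : (𝒳.filter (fun X => X.card = s)).card ≤ n ^ s := by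
      have hsub : 𝒳.filter (fun X => X.card = s)
          ⊆ (Finset.univ : Finset (Fin n)).powersetCard s := by
        intro X hX
        rw [Finset.mem_filter] at hX
        rw [Finset.mem_powersetCard]
        exact ⟨Finset.subset_univ _, hX.2⟩
      calc (𝒳.filter (fun X => X.card = s)).card
          ≤ ((Finset.univ : Finset (Fin n)).powersetCard s).card :=
            Finset.card_le_card hsub
        _ = Nat.choose n s := by rw [Finset.card_powersetCard, Finset.card_univ,
            Fintype.card_fin]
        _ ≤ n ^ s := Nat.choose_le_pow n s
    have hnn : (0:ℝ) ≤ (Nat.choose (Nat.choose s 3) (s/2+1)) * p^(s/2+1) := by positivity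
    calc ((𝒳.filter (fun X => X.card = s)).card : ℝ) *
            ((Nat.choose (Nat.choose s 3) (s/2+1)) * p^(s/2+1) : ℝ)
        ≤ ((n ^ s : ℕ) : ℝ) * ((Nat.choose (Nat.choose s 3) (s/2+1)) * p^(s/2+1) : ℝ) := by
          exact mul_le_mul_of_nonneg_right (by exact_mod_cast hcard) hnn
      _ = (n:ℝ)^s * ((Nat.choose (Nat.choose s 3) (s/2+1)) * p^(s/2+1) : ℝ) := by
          push_cast; ring
  exact step1.trans (step2.trans step3)

end Stmt14Aux

open Stmt14Aux

/-- Lemma 3.1: for `l ≥ 2` and `0 < ε < 1/(2l+3)`, the random 3-uniform hypergraph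
on `n` vertices with hyperedge probability `p = n^{-2+ε}` is almost surely
`(2l+2)`-modest, i.e. almost surely it has no super-dense vertex set (a set `X`
with `‖X‖ < 2[X]`) of cardinality `≤ 4l+4`. -/
theorem stmt14 (l : ℕ) (hl : 2 ≤ l) (ε : ℝ) (hε : 0 < ε)
    (hε' : ε < 1 / (2 * (l : ℝ) + 3)) :
    Filter.Tendsto
      (fun n : ℕ =>
        probEvent n ((n : ℝ) ^ (-2 + ε))
          (fun T => ∀ X : Finset (Fin n), X.card ≤ 2 * (2 * l + 2) →
            ¬ X.card < 2 * (T.filter (· ⊆ X)).card))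
      Filter.atTop (nhds 1) := by
  set L := 2 * (2 * l + 2) with hL
  set G : ℕ → ℝ := fun n => ∑ s ∈ Finset.range (L+1),
      (n:ℝ)^s * ((Nat.choose (Nat.choose s 3) (s/2+1) : ℝ) *
        ((n:ℝ)^(-2+ε))^(s/2+1)) with hG
  have hl0 : (0:ℝ) ≤ (l:ℕ) := Nat.cast_nonneg l
  have hεle : ε < 1 := by
    have h1 : (1:ℝ) ≤ 2*(l:ℝ)+3 := by linarith
    have : (1:ℝ)/(2*(l:ℝ)+3) ≤ 1 := by
      rw [div_le_one (by linarith)]; exact h1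
    linarith
  have hG0 : Filter.Tendsto G Filter.atTop (nhds 0) := by
    rw [hG]
    have h0 : (0:ℝ) = ∑ s ∈ Finset.range (L+1), (0:ℝ) := by simp
    rw [h0]
    refine tendsto_finset_sum _ fun s hs => ?_
    set k := s/2+1 with hk
    set c : ℝ := (s:ℝ) + (-2+ε) * (k:ℕ) with hc
    have hsL : s ≤ L := by
      rw [Finset.mem_range] at hs; omega
    have hcneg : c < 0 := by
      have h1 : s + 1 ≤ 2*k := by omega
      have h1' : (s:ℝ) + 1 ≤ 2*(k:ℝ) := by exact_mod_cast h1
      have h2 : k ≤ 2*l+3 := by omega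
      have h2' : (k:ℝ) ≤ 2*(l:ℝ)+3 := by exact_mod_cast h2
      have h3 : ε * (2*(l:ℝ)+3) < 1 := by
        rw [← lt_div_iff₀ (by linarith)]; exact hε'
      have h4 : ε * (k:ℝ) ≤ ε * (2*(l:ℝ)+3) := by
        exact mul_le_mul_of_nonneg_left h2' hε.le
      have hexp : c = (s:ℝ) - 2*(k:ℝ) + ε*(k:ℝ) := by rw [hc]; ring
      linarith
    have h1 : Filter.Tendsto (fun x : ℝ =>
        (Nat.choose (Nat.choose s 3) k : ℝ) * x ^ c) Filter.atTop (nhds 0) := by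
      have ht := tendsto_rpow_neg_atTop (y := -c) (by linarith)
      rw [neg_neg] at ht
      have := ht.const_mul (Nat.choose (Nat.choose s 3) k : ℝ)
      simpa using this
    have h2 := h1.comp tendsto_natCast_atTop_atTop
    refine Filter.Tendsto.congr' ?_ h2
    filter_upwards [Filter.eventually_ge_atTop 1] with n hn
    have hn0 : (0:ℝ) < (n:ℝ) := by exact_mod_cast hn
    show (Nat.choose (Nat.choose s 3) k : ℝ) * (n:ℝ) ^ c
      = (n:ℝ)^s * ((Nat.choose (Nat.choose s 3) k : ℝ) * ((n:ℝ)^(-2+ε))^k)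
    rw [← Real.rpow_natCast ((n:ℝ)^(-2+ε)) k, ← Real.rpow_mul hn0.le,
      ← Real.rpow_natCast (n:ℝ) s, hc, Real.rpow_add hn0]
    ring
  have hlow : Filter.Tendsto (fun n => 1 - G n) Filter.atTop (nhds 1) := by
    have := (tendsto_const_nhds (x := (1:ℝ)) (f := Filter.atTop (α := ℕ))).sub hG0
    simpa using this
  refine tendsto_of_tendsto_of_tendsto_of_le_of_le' hlow tendsto_const_nhds ?_ ?_
  · filter_upwards [Filter.eventually_ge_atTop 1] with n hn
    have hn0 : (1:ℝ) ≤ (n:ℝ) := by exact_mod_cast hn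
    have hp0 : (0:ℝ) ≤ (n:ℝ)^(-2+ε) := Real.rpow_nonneg (by linarith) _
    have hp1 : (n:ℝ)^(-2+ε) ≤ 1 :=
      Real.rpow_le_one_of_one_le_of_nonpos hn0 (by linarith)
    have hadd := probEvent_add_compl n ((n:ℝ)^(-2+ε))
      (fun T => ∀ X : Finset (Fin n), X.card ≤ L →
            ¬ X.card < 2 * (T.filter (· ⊆ X)).card)
    have hcb := compl_bound (n := n) hp0 hp1 L
    have hGn : G n = ∑ s ∈ Finset.range (L+1),
      (n:ℝ)^s * ((Nat.choose (Nat.choose s 3) (s/2+1) : ℝ) *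
        ((n:ℝ)^(-2+ε))^(s/2+1)) := rfl
    rw [hGn]
    linarith
  · filter_upwards [Filter.eventually_ge_atTop 1] with n hn
    have hn0 : (1:ℝ) ≤ (n:ℝ) := by exact_mod_cast hn
    exact probEvent_le_one (Real.rpow_nonneg (by linarith) _)
      (Real.rpow_le_one_of_one_le_of_nonpos hn0 (by linarith)) _
end

section
/- If an automorphism θ of an odd 2-multipede fixes every segment, then θ fixes every foot, i.e., θ is the identity. -/
variable {U : Type*} [DecidableEq U] [Fintype U]

/-- `x` is a foot: it has an outgoing `E`-edge. -/
def IsFoot (E : U → U → Prop) (x : U) : Prop := ∃ y, E x y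

/-- `y` is a segment: it has an incoming `E`-edge. -/
def IsSeg (E : U → U → Prop) (y : U) : Prop := ∃ x, E x y

/-- `A` is a slave of the segment set `X`: a 3-element set of feet with
`S(A) = X`. -/
def IsSlave (E : U → U → Prop) (S : U → U) (A X : Finset U) : Prop :=
  A.card = 3 ∧ (∀ a ∈ A, IsFoot E a) ∧ A.image S = X

/-- A 2-multipede `(U, E, T)` with segment map `S` (extending the foot-to-segment
map by the identity on segments).  Two slaves `A, B` of a segment hyperedge are
equivalent iff they differ at an even number of segments, i.e. `‖A \ B‖` is even;
for each segment hyperedge, the positive slaves (those that are hyperedges) form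
exactly one equivalence class (four slaves). -/
structure IsMultipede2 (E : U → U → Prop) (S : U → U)
    (T : Finset (Finset U)) : Prop where
  disj : ∀ x, ¬ (IsFoot E x ∧ IsSeg E x)
  cover : ∀ x, IsFoot E x ∨ IsSeg E x
  foot_unique : ∀ x, IsFoot E x → ∃! y, E x y
  seg_two_feet : ∀ y, IsSeg E y →
    ∃ a b, a ≠ b ∧ E a y ∧ E b y ∧ ∀ c, E c y → c = a ∨ c = b
  S_foot : ∀ x, IsFoot E x → E x (S x)
  S_seg : ∀ y, IsSeg E y → S y = y
  edge_card : ∀ h ∈ T, h.card = 3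
  edge_homog : ∀ h ∈ T, (∀ x ∈ h, IsSeg E x) ∨ (∀ x ∈ h, IsFoot E x)
  foot_edge_proj : ∀ h ∈ T, (∀ x ∈ h, IsFoot E x) → h.image S ∈ T
  slave_exists : ∀ X ∈ T, (∀ x ∈ X, IsSeg E x) →
    ∃ A : Finset U, IsSlave E S A X ∧ A ∈ T
  slave_parity : ∀ X ∈ T, (∀ x ∈ X, IsSeg E x) →
    ∀ A B : Finset U, IsSlave E S A X → IsSlave E S B X → A ∈ T →
      (B ∈ T ↔ Even ((A \ B).card))

/-- The segment hypergraph is odd: every nonempty set of segments meets some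
segment hyperedge in an odd number of vertices. -/
def SegOdd (E : U → U → Prop) (T : Finset (Finset U)) : Prop :=
  ∀ X : Finset U, X.Nonempty → (∀ x ∈ X, IsSeg E x) →
    ∃ h ∈ T, (∀ x ∈ h, IsSeg E x) ∧ Odd ((h ∩ X).card)

/-- If an automorphism `θ` of an odd 2-multipede fixes every segment, then it
fixes every foot, i.e. it is the identity. -/
theorem stmt17 (E : U → U → Prop) (S : U → U) (T : Finset (Finset U))
    (hM : IsMultipede2 E S T) (hodd : SegOdd E T)
    (θ : U ≃ U) (hE : ∀ a b, E (θ a) (θ b) ↔ E a b)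
    (hT : ∀ h : Finset U, h.image θ ∈ T ↔ h ∈ T)
    (hseg : ∀ y, IsSeg E y → θ y = y) :
    ∀ x, θ x = x := by
  classical
  -- θ sends a foot to a foot of the same segment
  have hFootθ : ∀ x, IsFoot E x → E (θ x) (S x) := by
    intro x hx
    have h1 : E x (S x) := hM.S_foot x hx
    have h2 : E (θ x) (θ (S x)) := (hE x (S x)).mpr h1
    rwa [hseg _ ⟨x, h1⟩] at h2
  have hSθ : ∀ x, IsFoot E x → S (θ x) = S x := by
    intro x hx
    have h2 : E (θ x) (S x) := hFootθ x hx
    obtain ⟨y, hy, huniq⟩ := hM.foot_unique (θ x) ⟨_, h2⟩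
    rw [huniq _ (hM.S_foot (θ x) ⟨_, h2⟩), huniq _ h2]
  -- pairing: the two feet of a segment are either both moved or both fixed
  have hpair : ∀ y, IsSeg E y → ∀ x x', E x y → E x' y → θ x ≠ x → θ x' ≠ x' := by
    intro y hy x x' hxy hx'y hxne hx'eq
    apply hxne
    by_contra hxne'
    have hxx' : x ≠ x' := by rintro rfl; exact hxne hx'eq
    have hθxy : E (θ x) y := by
      have := (hE x y).mpr hxy
      rwa [hseg _ hy] at this
    obtain ⟨a, b, hab, hay, hby, hcov⟩ := hM.seg_two_feet y hy
    have hxab := hcov x hxy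
    have hx'ab := hcov x' hx'y
    have hθab := hcov (θ x) hθxy
    -- θ x ∈ {a,b} = {x, x'}
    have hθin : θ x = x ∨ θ x = x' := by
      rcases hxab with rfl | rfl <;> rcases hx'ab with h | h <;>
        rcases hθab with h2 | h2 <;> subst_vars <;> tauto
    rcases hθin with h | h
    · exact absurd h hxne'
    · exact absurd (θ.injective (h.trans hx'eq.symm)) hxx'
  intro x0
  by_contra hx0
  have hx0foot : IsFoot E x0 := by
    rcases hM.cover x0 with h | h
    · exact h
    · exact absurd (hseg x0 h) hx0
  -- the set of segments whose feet are moved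
  set X : Finset U := Finset.univ.filter (fun y => ∃ x, E x y ∧ θ x ≠ x) with hX
  have hXmem : ∀ y, y ∈ X ↔ ∃ x, E x y ∧ θ x ≠ x := by
    intro y; simp [hX]
  have hXne : X.Nonempty := ⟨S x0, (hXmem _).mpr ⟨x0, hM.S_foot x0 hx0foot, hx0⟩⟩
  have hXseg : ∀ y ∈ X, IsSeg E y := by
    intro y hy
    obtain ⟨x, hxy, _⟩ := (hXmem y).mp hy
    exact ⟨x, hxy⟩
  obtain ⟨h, hhT, hhseg, hhodd⟩ := hodd X hXne hXseg
  obtain ⟨A, ⟨hAcard, hAfeet, hAimg⟩, hAT⟩ := hM.slave_exists h hhT hhseg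
  set B : Finset U := A.image θ with hB
  have hBcard : B.card = 3 := by
    rw [hB, Finset.card_image_of_injective _ θ.injective, hAcard]
  have hBfeet : ∀ b ∈ B, IsFoot E b := by
    intro b hb
    obtain ⟨a, ha, rfl⟩ := Finset.mem_image.mp hb
    exact ⟨S a, hFootθ a (hAfeet a ha)⟩
  have hBimg : B.image S = h := by
    rw [hB, Finset.image_image]
    rw [← hAimg]
    apply Finset.image_congr
    intro a ha
    exact hSθ a (hAfeet a ha)
  have hBT : B ∈ T := (hT A).mpr hAT
  have hEven : Even ((A \ B).card) :=
    (hM.slave_parity h hhT hhseg A B ⟨hAcard, hAfeet, hAimg⟩ ⟨hBcard, hBfeet, hBimg⟩ hAT).mp hBT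
  have hSinj : Set.InjOn S A := by
    rw [← Finset.card_image_iff, hAimg, hM.edge_card h hhT, hAcard]
  have hdiff : A \ B = A.filter (fun a => θ a ≠ a) := by
    ext a
    simp only [Finset.mem_sdiff, Finset.mem_filter, hB, Finset.mem_image]
    constructor
    · rintro ⟨ha, hnb⟩
      refine ⟨ha, fun he => hnb ⟨a, ha, he⟩⟩
    · rintro ⟨ha, hne⟩
      refine ⟨ha, ?_⟩
      rintro ⟨b, hb, hba⟩
      have hSab : S b = S a := by
        rw [← hba, hSθ b (hAfeet b hb)]
      have : b = a := hSinj hb ha hSab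
      exact hne (this ▸ hba)
  have himg : (A.filter (fun a => θ a ≠ a)).image S = h ∩ X := by
    ext y
    simp only [Finset.mem_image, Finset.mem_filter, Finset.mem_inter]
    constructor
    · rintro ⟨a, ⟨ha, hne⟩, rfl⟩
      refine ⟨?_, (hXmem _).mpr ⟨a, hM.S_foot a (hAfeet a ha), hne⟩⟩
      rw [← hAimg]; exact Finset.mem_image_of_mem S ha
    · rintro ⟨hyh, hyX⟩
      rw [← hAimg] at hyh
      obtain ⟨a, ha, rfl⟩ := Finset.mem_image.mp hyh
      obtain ⟨x, hxy, hxne⟩ := (hXmem _).mp hyX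
      have hane : θ a ≠ a :=
        hpair (S a) (hhseg _ (hAimg ▸ Finset.mem_image_of_mem S ha)) x a hxy
          (hM.S_foot a (hAfeet a ha)) hxne
      exact ⟨a, ⟨ha, hane⟩, rfl⟩
  have hcard : (A \ B).card = (h ∩ X).card := by
    rw [hdiff, ← himg]
    exact (Finset.card_image_of_injOn (hSinj.mono (by intro x hx; simp only [Finset.coe_filter, Set.mem_setOf_eq] at hx; exact hx.1))).symm
  rw [hcard] at hEven
  exact (Nat.not_even_iff_odd.mpr hhodd) hEven
end

section
/- Every odd 4-multipede is rigid: its only automorphism is the identity. -/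
variable {U : Type*} [DecidableEq U] [Fintype U]

/-- `z` is a super-segment: neither a foot nor a segment. -/
def IsSuper (E : U → U → Prop) (z : U) : Prop := ¬ IsFoot E z ∧ ¬ IsSeg E z

/-- A 4-multipede: a 2-multipede (except that feet and segments need not cover
the universe) together with a linear order `lt` on the segments and a containment
relation `mem` between segments and super-segments such that every set of
segments is represented by a unique super-segment. -/
structure IsMultipede4 (E : U → U → Prop) (S : U → U) (T : Finset (Finset U))
    (lt : U → U → Prop) (mem : U → U → Prop) : Prop where
  disj : ∀ x, ¬ (IsFoot E x ∧ IsSeg E x)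
  foot_unique : ∀ x, IsFoot E x → ∃! y, E x y
  seg_two_feet : ∀ y, IsSeg E y →
    ∃ a b, a ≠ b ∧ E a y ∧ E b y ∧ ∀ c, E c y → c = a ∨ c = b
  S_foot : ∀ x, IsFoot E x → E x (S x)
  S_seg : ∀ y, IsSeg E y → S y = y
  edge_card : ∀ h ∈ T, h.card = 3
  edge_homog : ∀ h ∈ T, (∀ x ∈ h, IsSeg E x) ∨ (∀ x ∈ h, IsFoot E x)
  foot_edge_proj : ∀ h ∈ T, (∀ x ∈ h, IsFoot E x) → h.image S ∈ T
  slave_exists : ∀ X ∈ T, (∀ x ∈ X, IsSeg E x) →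
    ∃ A : Finset U, IsSlave E S A X ∧ A ∈ T
  slave_parity : ∀ X ∈ T, (∀ x ∈ X, IsSeg E x) →
    ∀ A B : Finset U, IsSlave E S A X → IsSlave E S B X → A ∈ T →
      (B ∈ T ↔ Even ((A \ B).card))
  lt_seg : ∀ x y, lt x y → IsSeg E x ∧ IsSeg E y
  lt_irrefl : ∀ x, ¬ lt x x
  lt_trans : ∀ x y z, lt x y → lt y z → lt x z
  lt_total : ∀ x y, IsSeg E x → IsSeg E y → x ≠ y → lt x y ∨ lt y x
  mem_sorts : ∀ x Y, mem x Y → IsSeg E x ∧ IsSuper E Y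
  super_rep : ∀ s : Finset U, (∀ x ∈ s, IsSeg E x) →
    ∃! Y : U, IsSuper E Y ∧ ∀ x, mem x Y ↔ x ∈ s

/-- Every odd 4-multipede is rigid: its only automorphism is the identity. -/
theorem stmt19 (E : U → U → Prop) (S : U → U) (T : Finset (Finset U))
    (lt mem : U → U → Prop) (hM : IsMultipede4 E S T lt mem)
    (hodd : SegOdd E T) (θ : U ≃ U)
    (hE : ∀ a b, E (θ a) (θ b) ↔ E a b)
    (hT : ∀ h : Finset U, h.image θ ∈ T ↔ h ∈ T)
    (hlt : ∀ a b, lt (θ a) (θ b) ↔ lt a b)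
    (hmem : ∀ a b, mem (θ a) (θ b) ↔ mem a b) :
    ∀ x, θ x = x := by
  classical
  -- θ and θ⁻¹ preserve feet and segments
  have hFoot : ∀ x, IsFoot E x ↔ IsFoot E (θ x) := by
    intro x
    constructor
    · rintro ⟨y, hy⟩; exact ⟨θ y, (hE x y).mpr hy⟩
    · rintro ⟨y, hy⟩
      refine ⟨θ.symm y, (hE x (θ.symm y)).mp ?_⟩
      simpa using hy
  have hSeg : ∀ y, IsSeg E y ↔ IsSeg E (θ y) := by
    intro y
    constructor
    · rintro ⟨x, hx⟩; exact ⟨θ x, (hE x y).mpr hx⟩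
    · rintro ⟨x, hx⟩
      refine ⟨θ.symm x, (hE (θ.symm x) y).mp ?_⟩
      simpa using hx
  -- Step 1 : θ fixes all segments (rank argument on the linear order lt)
  have hsegfix : ∀ y, IsSeg E y → θ y = y := by
    have hrank : ∀ y, (Finset.univ.filter (fun z => lt z (θ y))).card
        = (Finset.univ.filter (fun z => lt z y)).card := by
      intro y
      have himg : (Finset.univ.filter (fun z => lt z (θ y)))
          = (Finset.univ.filter (fun z => lt z y)).image θ := by
        ext z
        simp only [Finset.mem_filter, Finset.mem_image, Finset.mem_univ, true_and]
        constructor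
        · intro hz
          refine ⟨θ.symm z, ?_, by simp⟩
          have : lt (θ (θ.symm z)) (θ y) := by simpa using hz
          exact (hlt _ _).mp this
        · rintro ⟨w, hw, rfl⟩
          exact (hlt w y).mpr hw
      rw [himg, Finset.card_image_of_injective _ θ.injective]
    have hmono : ∀ y y', lt y y' →
        (Finset.univ.filter (fun z => lt z y)).card
          < (Finset.univ.filter (fun z => lt z y')).card := by
      intro y y' hyy'
      apply Finset.card_lt_card
      constructor
      · intro z hz
        simp only [Finset.mem_filter, Finset.mem_univ, true_and] at hz ⊢
        exact hM.lt_trans _ _ _ hz hyy'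
      · intro hsub
        have : y ∈ Finset.univ.filter (fun z => lt z y') := by
          simp only [Finset.mem_filter, Finset.mem_univ, true_and]; exact hyy'
        have := hsub this
        simp only [Finset.mem_filter, Finset.mem_univ, true_and] at this
        exact hM.lt_irrefl y this
    intro y hy
    by_contra hne
    have hθy : IsSeg E (θ y) := (hSeg y).mp hy
    rcases hM.lt_total (θ y) y hθy hy hne with h1 | h1
    · have := hmono _ _ h1
      rw [hrank y] at this
      omega
    · have := hmono _ _ h1
      rw [hrank y] at this
      omega
  -- Step 2 : θ fixes all super-segments
  have hsuperfix : ∀ z, IsSuper E z → θ z = z := by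
    intro z hz
    set s : Finset U := Finset.univ.filter (fun x => mem x z) with hs_def
    have hs : ∀ x ∈ s, IsSeg E x := by
      intro x hx
      simp only [hs_def, Finset.mem_filter, Finset.mem_univ, true_and] at hx
      exact (hM.mem_sorts x z hx).1
    obtain ⟨Y, _, hYuniq⟩ := hM.super_rep s hs
    have h1 : IsSuper E z ∧ ∀ x, mem x z ↔ x ∈ s := by
      refine ⟨hz, fun x => ?_⟩
      simp [hs_def]
    have hθsuper : IsSuper E (θ z) := by
      constructor
      · intro hf
        exact hz.1 ((hFoot z).mpr hf)
      · intro hsg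
        exact hz.2 ((hSeg z).mpr hsg)
    have h2 : IsSuper E (θ z) ∧ ∀ x, mem x (θ z) ↔ x ∈ s := by
      refine ⟨hθsuper, fun x => ?_⟩
      constructor
      · intro hx
        have hxseg := (hM.mem_sorts x (θ z) hx).1
        have hmx : mem (θ x) (θ z) := by rw [hsegfix x hxseg]; exact hx
        exact (h1.2 x).1 ((hmem x z).mp hmx)
      · intro hx
        have hxseg := hs x hx
        have hmx : mem (θ x) (θ z) := (hmem x z).mpr ((h1.2 x).2 hx)
        rwa [hsegfix x hxseg] at hmx
    rw [hYuniq _ h2, hYuniq _ h1]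
  -- θ respects the segment of a foot
  have hSfix : ∀ a, IsFoot E a → S (θ a) = S a := by
    intro a ha
    have ha' : IsFoot E (θ a) := (hFoot a).mp ha
    have h1 : E a (S a) := hM.S_foot a ha
    have hSseg : IsSeg E (S a) := ⟨a, h1⟩
    have h2 : E (θ a) (S a) := by
      have := (hE a (S a)).mpr h1
      rwa [hsegfix _ hSseg] at this
    have h3 : E (θ a) (S (θ a)) := hM.S_foot _ ha'
    obtain ⟨y, _, huniq⟩ := hM.foot_unique (θ a) ha'
    rw [huniq _ h3, huniq _ h2]
  -- If one foot of a segment moves, so does the other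
  have hswap : ∀ a c, IsFoot E a → IsFoot E c → θ a ≠ a → S c = S a → θ c ≠ c := by
    intro a c ha hc hmove hSc
    have ha' : IsFoot E (θ a) := (hFoot a).mp ha
    have hEa : E a (S a) := hM.S_foot a ha
    have hSseg : IsSeg E (S a) := ⟨a, hEa⟩
    have hEθa : E (θ a) (S a) := by
      have := (hE a (S a)).mpr hEa
      rwa [hsegfix _ hSseg] at this
    have hEc : E c (S a) := by rw [← hSc]; exact hM.S_foot c hc
    obtain ⟨p, q, hpq, hp, hq, htwo⟩ := hM.seg_two_feet (S a) hSseg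
    have hca : c = a ∨ c = θ a := by
      rcases htwo a hEa with rfl | rfl <;> rcases htwo (θ a) hEθa with h2 | h2 <;>
        rcases htwo c hEc with h3 | h3 <;> subst_vars <;> tauto
    rcases hca with rfl | rfl
    · exact hmove
    · intro hcc
      exact hmove (θ.injective hcc)
  -- Step 3 : θ fixes all feet (parity argument using oddness)
  have hfootfix : ∀ a, IsFoot E a → θ a = a := by
    by_contra hcon
    push_neg at hcon
    obtain ⟨a, ha, hne⟩ := hcon
    set X : Finset U := Finset.univ.filter
      (fun y => ∃ c, IsFoot E c ∧ S c = y ∧ θ c ≠ c) with hX_def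
    have hXne : X.Nonempty := by
      refine ⟨S a, ?_⟩
      simp only [hX_def, Finset.mem_filter, Finset.mem_univ, true_and]
      exact ⟨a, ha, rfl, hne⟩
    have hXseg : ∀ x ∈ X, IsSeg E x := by
      intro x hx
      simp only [hX_def, Finset.mem_filter, Finset.mem_univ, true_and] at hx
      obtain ⟨c, hc, rfl, -⟩ := hx
      exact ⟨c, hM.S_foot c hc⟩
    obtain ⟨h, hhT, hhseg, hoddcard⟩ := hodd X hXne hXseg
    obtain ⟨A, hAslave, hAT⟩ := hM.slave_exists h hhT hhseg
    obtain ⟨hAcard, hAfeet, hAim⟩ := hAslave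
    set B : Finset U := A.image θ with hB_def
    have hBT : B ∈ T := (hT A).mpr hAT
    have hBim : B.image S = h := by
      rw [hB_def, Finset.image_image]
      rw [← hAim]
      apply Finset.image_congr
      intro x hx
      exact hSfix x (hAfeet x hx)
    have hBslave : IsSlave E S B h := by
      refine ⟨?_, ?_, hBim⟩
      · rw [hB_def, Finset.card_image_of_injective _ θ.injective, hAcard]
      · intro b hb
        simp only [hB_def, Finset.mem_image] at hb
        obtain ⟨x, hx, rfl⟩ := hb
        exact (hFoot x).mp (hAfeet x hx)
    have hinjA : Set.InjOn S A := by
      rw [← Finset.card_image_iff]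
      rw [hAim, hM.edge_card h hhT, hAcard]
    have hAB : A \ B = A.filter (fun x => θ x ≠ x) := by
      ext x
      simp only [Finset.mem_sdiff, Finset.mem_filter, hB_def, Finset.mem_image]
      constructor
      · rintro ⟨hxA, hxB⟩
        refine ⟨hxA, fun hfix => hxB ⟨x, hxA, hfix⟩⟩
      · rintro ⟨hxA, hmove⟩
        refine ⟨hxA, ?_⟩
        rintro ⟨b, hbA, hbx⟩
        have hSb : S x = S b := by
          rw [← hbx, hSfix b (hAfeet b hbA)]
        have : x = b := hinjA hxA hbA hSb
        subst this
        exact hmove hbx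
    have hfilter_eq : A.filter (fun x => θ x ≠ x) = A.filter (fun x => S x ∈ X) := by
      apply Finset.filter_congr
      intro x hxA
      constructor
      · intro hmove
        simp only [hX_def, Finset.mem_filter, Finset.mem_univ, true_and]
        exact ⟨x, hAfeet x hxA, rfl, hmove⟩
      · intro hSx
        simp only [hX_def, Finset.mem_filter, Finset.mem_univ, true_and] at hSx
        obtain ⟨c, hc, hSc, hcmove⟩ := hSx
        exact hswap c x hc (hAfeet x hxA) hcmove hSc.symm
    have hcard_eq : (A.filter (fun x => S x ∈ X)).card = (h ∩ X).card := by
      have himg : (A.filter (fun x => S x ∈ X)).image S = h ∩ X := by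
        ext y
        simp only [Finset.mem_image, Finset.mem_filter, Finset.mem_inter]
        constructor
        · rintro ⟨x, ⟨hxA, hxX⟩, rfl⟩
          exact ⟨hAim ▸ Finset.mem_image_of_mem S hxA, hxX⟩
        · rintro ⟨hyh, hyX⟩
          rw [← hAim] at hyh
          obtain ⟨x, hxA, rfl⟩ := Finset.mem_image.mp hyh
          exact ⟨x, ⟨hxA, hyX⟩, rfl⟩
      rw [← himg]
      exact (Finset.card_image_of_injOn
        (hinjA.mono (by exact_mod_cast Finset.filter_subset _ _))).symm
    have heven : Even ((A \ B).card) :=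
      (hM.slave_parity h hhT hhseg A B ⟨hAcard, hAfeet, hAim⟩ hBslave hAT).mp hBT
    rw [hAB, hfilter_eq, hcard_eq] at heven
    exact Nat.not_even_iff_odd.mpr hoddcard heven
  -- Conclusion
  intro x
  by_cases hf : IsFoot E x
  · exact hfootfix x hf
  by_cases hs : IsSeg E x
  · exact hsegfix x hs
  · exact hsuperfix x ⟨hf, hs⟩
end
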